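/- arXiv:math/0201278 — 4 statements merged into one kernel-verified Lean document; each statement's English description precedes it below -/
import Mathlib

section
/- Let Q = [-1,1] × [-1,1] ⊆ ℝ² and let T = [-1,1] × (ℝ ∖ (-1,1)) ⊆ ℝ². Let f : ℝ² → ℝ² be continuous on Q and injective on Q. If f(frontier Q) ∩ T = ∅, then f(Q) ∩ T = ∅. -/
open Set

noncomputable section

/-- The closed unit square `[-1,1] × [-1,1]` in the plane. -/
def unitSquare : Set (ℝ × ℝ) := Set.Icc (-1 : ℝ) 1 ×ˢ Set.Icc (-1 : ℝ) 1

/-- The union of the two closed half-strips above and below the unit square. -/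
def halfStrips : Set (ℝ × ℝ) := Set.Icc (-1 : ℝ) 1 ×ˢ (Set.Ioo (-1 : ℝ) 1)ᶜ

/-- `θ` is a continuous argument lift of `γ` on `[0,1]`. -/
def IsLift (γ : ℝ → ℂ) (θ : ℝ → ℝ) : Prop :=
  ContinuousOn θ (Icc 0 1) ∧
    ∀ t ∈ Icc (0:ℝ) 1, γ t = (‖γ t‖ : ℂ) * Complex.exp (θ t * Complex.I)

/-- A continuous function on an interval taking values in a discrete arithmetic
progression is constant (endpoint version). -/
lemma constancy_helper {φ : ℝ → ℝ} {a b c₀ d : ℝ} (hab : a ≤ b) (hd : 0 < d)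
    (hφ : ContinuousOn φ (Icc a b))
    (hv : ∀ t ∈ Icc a b, ∃ n : ℤ, φ t = c₀ + n * d) : φ b = φ a := by
  obtain ⟨na, hna⟩ := hv a (left_mem_Icc.2 hab)
  obtain ⟨nb, hnb⟩ := hv b (right_mem_Icc.2 hab)
  rcases lt_trichotomy (φ a) (φ b) with h | h | h
  · exfalso
    have h1 : (na : ℝ) * d < (nb : ℝ) * d := by rw [hna, hnb] at h; linarith
    have h2 : (na : ℝ) < (nb : ℝ) := (mul_lt_mul_iff_of_pos_right hd).1 h1
    have h2' : na < nb := by exact_mod_cast h2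
    have h3 : ((na : ℝ) + 1) ≤ (nb : ℝ) := by exact_mod_cast Int.add_one_le_iff.2 h2'
    have h4 : ((na : ℝ) + 1) * d ≤ (nb : ℝ) * d := mul_le_mul_of_nonneg_right h3 hd.le
    have hvmem : c₀ + na * d + d / 2 ∈ Ioo (φ a) (φ b) := by
      constructor
      · rw [hna]; linarith
      · rw [hnb]; nlinarith
    obtain ⟨t, ht, htv⟩ := intermediate_value_Ioo hab hφ hvmem
    obtain ⟨m, hm⟩ := hv t (Ioo_subset_Icc_self ht)
    rw [hm] at htv
    rcases le_or_gt m na with hmn | hmn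
    · have h5 : (m : ℝ) ≤ na := by exact_mod_cast hmn
      have h6 : (m : ℝ) * d ≤ (na : ℝ) * d := mul_le_mul_of_nonneg_right h5 hd.le
      linarith
    · have h5 : ((na : ℝ) + 1) ≤ m := by exact_mod_cast Int.add_one_le_iff.2 hmn
      have h6 : ((na : ℝ) + 1) * d ≤ (m : ℝ) * d := mul_le_mul_of_nonneg_right h5 hd.le
      nlinarith
  · exact h.symm
  · exfalso
    have h1 : (nb : ℝ) * d < (na : ℝ) * d := by rw [hna, hnb] at h; linarith
    have h2 : (nb : ℝ) < (na : ℝ) := (mul_lt_mul_iff_of_pos_right hd).1 h1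
    have h2' : nb < na := by exact_mod_cast h2
    have h3 : ((nb : ℝ) + 1) ≤ (na : ℝ) := by exact_mod_cast Int.add_one_le_iff.2 h2'
    have h4 : ((nb : ℝ) + 1) * d ≤ (na : ℝ) * d := mul_le_mul_of_nonneg_right h3 hd.le
    have hvmem : c₀ + nb * d + d / 2 ∈ Ioo (φ b) (φ a) := by
      constructor
      · rw [hnb]; linarith
      · rw [hna]; nlinarith
    obtain ⟨t, ht, htv⟩ := intermediate_value_Ioo' hab hφ hvmem
    obtain ⟨m, hm⟩ := hv t (Ioo_subset_Icc_self ht)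
    rw [hm] at htv
    rcases le_or_gt m nb with hmn | hmn
    · have h5 : (m : ℝ) ≤ nb := by exact_mod_cast hmn
      have h6 : (m : ℝ) * d ≤ (nb : ℝ) * d := mul_le_mul_of_nonneg_right h5 hd.le
      linarith
    · have h5 : ((nb : ℝ) + 1) ≤ m := by exact_mod_cast Int.add_one_le_iff.2 hmn
      have h6 : ((nb : ℝ) + 1) * d ≤ (m : ℝ) * d := mul_le_mul_of_nonneg_right h5 hd.le
      nlinarith

lemma ball_one_subset_slitPlane {z : ℂ} (h : ‖z - 1‖ < 1) : z ∈ Complex.slitPlane := by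
  refine Complex.mem_slitPlane_iff.2 (Or.inl ?_)
  have h1 : |(z - 1).re| ≤ ‖z - 1‖ := Complex.abs_re_le_norm _
  have h2 : (z - 1).re = z.re - 1 := by simp
  rw [h2] at h1
  have := abs_le.1 h1
  linarith [this.1]

lemma exists_lift {γ : ℝ → ℂ} (hc : ContinuousOn γ (Icc 0 1))
    (h0 : ∀ t ∈ Icc (0:ℝ) 1, γ t ≠ 0) : ∃ θ, IsLift γ θ := by
  have habs : ContinuousOn (fun t => ‖γ t‖) (Icc 0 1) :=
    continuous_norm.comp_continuousOn hc
  obtain ⟨t₀, ht₀, hmin'⟩ := isCompact_Icc.exists_isMinOn ⟨0, by norm_num⟩ habs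
  have hmin : ∀ t ∈ Icc (0:ℝ) 1, ‖γ t₀‖ ≤ ‖γ t‖ := fun t ht => hmin' ht
  set m : ℝ := ‖γ t₀‖ with hm_def
  have hm : 0 < m := norm_pos_iff.2 (h0 t₀ ht₀)
  have hu := isCompact_Icc.uniformContinuousOn_of_continuous hc
  rw [Metric.uniformContinuousOn_iff] at hu
  obtain ⟨δ, hδ, hδ'⟩ := hu m hm
  obtain ⟨n, hn⟩ := exists_nat_gt (1 / δ)
  have hnpos : 0 < (n : ℝ) := lt_trans (by positivity) hn
  have hstep : (1 : ℝ) / n < δ := by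
    rw [div_lt_iff₀ hnpos]
    rw [div_lt_iff₀ hδ] at hn
    linarith [hn]
  -- ratios over short subintervals lie near 1
  have hratio : ∀ s t : ℝ, s ∈ Icc (0:ℝ) 1 → t ∈ Icc (0:ℝ) 1 → |s - t| ≤ 1/n →
      ‖γ s / γ t - 1‖ < 1 := by
    intro s t hs ht hd
    have h1 : dist (γ s) (γ t) < m := hδ' s hs t ht (lt_of_le_of_lt (by simpa [Real.dist_eq] using hd) hstep)
    have h2 : ‖γ s - γ t‖ < ‖γ t‖ :=
      lt_of_lt_of_le (by simpa [Complex.dist_eq] using h1) (hmin t ht)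
    have hne : γ t ≠ 0 := h0 t ht
    have : γ s / γ t - 1 = (γ s - γ t) / γ t := by field_simp
    rw [this, norm_div, div_lt_one (norm_pos_iff.2 hne)]
    exact h2
  have key : ∀ k : ℕ, k ≤ n → ∃ θ : ℝ → ℝ, ContinuousOn θ (Icc 0 ((k : ℝ)/n)) ∧
      ∀ t ∈ Icc (0:ℝ) ((k : ℝ)/n),
        γ t = (‖γ t‖ : ℂ) * Complex.exp (θ t * Complex.I) := by
    intro k
    induction k with
    | zero =>
      intro _
      refine ⟨fun _ => Complex.arg (γ 0), continuousOn_const, ?_⟩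
      intro t ht
      simp only [Nat.cast_zero, zero_div, Icc_self, mem_singleton_iff] at ht
      subst ht
      exact (Complex.norm_mul_exp_arg_mul_I (γ 0)).symm
    | succ k ih =>
      intro hk1
      push_cast
      obtain ⟨θ, hθc, hθl⟩ := ih (le_of_lt (Nat.lt_of_succ_le hk1))
      have hkn0 : (0:ℝ) ≤ (k : ℝ) / n := by positivity
      have hknle : (k:ℝ)/n ≤ ((k:ℝ)+1)/n := by gcongr; linarith
      have hkn1 : (k:ℝ)/n ∈ Icc (0:ℝ) 1 := by
        constructor
        · exact hkn0
        · rw [div_le_one hnpos]; exact_mod_cast le_of_lt (Nat.lt_of_succ_le hk1)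
      have hkn'1 : ∀ t ∈ Icc (0:ℝ) (((k:ℕ)+1:ℝ)/n), t ∈ Icc (0:ℝ) 1 := by
        intro t ht
        refine ⟨ht.1, le_trans ht.2 ?_⟩
        rw [div_le_one hnpos]; exact_mod_cast hk1
      have hmaxmem : ∀ t ∈ Icc (0:ℝ) (((k:ℕ)+1:ℝ)/n), max t ((k:ℝ)/n) ∈ Icc (0:ℝ) 1 := by
        intro t ht
        constructor
        · exact le_trans ht.1 (le_max_left _ _)
        · apply max_le (hkn'1 t ht).2 hkn1.2
      have hmaxdist : ∀ t ∈ Icc (0:ℝ) (((k:ℕ)+1:ℝ)/n), |max t ((k:ℝ)/n) - (k:ℝ)/n| ≤ 1/n := by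
        intro t ht
        rw [abs_le]
        constructor
        · linarith [le_max_right t ((k:ℝ)/n), (by positivity : (0:ℝ) ≤ 1/(n:ℝ))]
        · have h1 : max t ((k:ℝ)/n) ≤ ((k:ℕ)+1:ℝ)/n := max_le ht.2 hknle
          have h2 : ((k:ℕ)+1:ℝ)/n = (k:ℝ)/n + 1/n := by push_cast; ring
          linarith [h1, h2 ▸ h1]
      have hrat : ∀ t ∈ Icc (0:ℝ) (((k:ℕ)+1:ℝ)/n),
          ‖γ (max t ((k:ℝ)/n)) / γ ((k:ℝ)/n) - 1‖ < 1 := by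
        intro t ht
        exact hratio _ _ (hmaxmem t ht) hkn1 (hmaxdist t ht)
      have hknne : γ ((k:ℝ)/n) ≠ 0 := h0 _ hkn1
      refine ⟨fun t => θ (min t ((k:ℝ)/n)) + Complex.arg (γ (max t ((k:ℝ)/n)) / γ ((k:ℝ)/n)),
        ?_, ?_⟩
      · -- continuity
        apply ContinuousOn.add
        · apply hθc.comp ((continuous_id.min continuous_const).continuousOn)
          intro t ht
          exact ⟨le_min ht.1 hkn0, min_le_right _ _⟩
        · have hgc : ContinuousOn (fun t => γ (max t ((k:ℝ)/n)) / γ ((k:ℝ)/n))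
              (Icc (0:ℝ) (((k:ℕ)+1:ℝ)/n)) := by
            apply ContinuousOn.div_const
            exact hc.comp ((continuous_id.max continuous_const).continuousOn) hmaxmem
          intro t ht
          exact ContinuousAt.comp_continuousWithinAt
            (g := Complex.arg) (f := fun t => γ (max t ((k:ℝ)/n)) / γ ((k:ℝ)/n))
            (Complex.continuousAt_arg (ball_one_subset_slitPlane (hrat t ht))) (hgc t ht)
      · -- lift property
        intro t ht
        rcases le_total t ((k:ℝ)/n) with hle | hle
        · have h1 : min t ((k:ℝ)/n) = t := min_eq_left hle
          have h2 : max t ((k:ℝ)/n) = (k:ℝ)/n := max_eq_right hle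
          simp only [h1, h2, div_self hknne, Complex.arg_one, add_zero]
          exact hθl t ⟨ht.1, hle⟩
        · have h1 : min t ((k:ℝ)/n) = (k:ℝ)/n := min_eq_right hle
          have h2 : max t ((k:ℝ)/n) = t := max_eq_left hle
          simp only [h1, h2]
          have htne : γ t ≠ 0 := h0 t (hkn'1 t ht)
          have habsne : (‖γ t‖ : ℂ) ≠ 0 := by
            exact_mod_cast norm_ne_zero_iff.2 htne
          have habskne : (‖γ ((k:ℝ)/n)‖ : ℂ) ≠ 0 := by
            exact_mod_cast norm_ne_zero_iff.2 hknne
          have e4 : Complex.exp ((θ ((k:ℝ)/n) : ℂ) * Complex.I)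
              = γ ((k:ℝ)/n) / (‖γ ((k:ℝ)/n)‖ : ℂ) := by
            nth_rewrite 1 [hθl ((k:ℝ)/n) ⟨hkn0, le_refl _⟩]
            field_simp
          have hne : (‖γ t / γ ((k:ℝ)/n)‖ : ℂ) ≠ 0 := by
            rw [norm_div]
            push_cast
            exact div_ne_zero (by exact_mod_cast norm_ne_zero_iff.2 htne)
              (by exact_mod_cast norm_ne_zero_iff.2 hknne)
          have e5 : Complex.exp ((Complex.arg (γ t / γ ((k:ℝ)/n)) : ℂ) * Complex.I)
              = (γ t / γ ((k:ℝ)/n)) / (‖γ t / γ ((k:ℝ)/n)‖ : ℂ) := by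
            rw [eq_div_iff hne, mul_comm]
            exact Complex.norm_mul_exp_arg_mul_I _
          push_cast
          rw [add_mul, Complex.exp_add, e4, e5, norm_div]
          push_cast
          field_simp
  obtain ⟨θ, hθc, hθl⟩ := key n le_rfl
  have hnn : (n:ℝ)/n = 1 := div_self (ne_of_gt hnpos)
  rw [hnn] at hθc hθl
  exact ⟨θ, hθc, hθl⟩

open scoped Classical in
/-- The total argument variation of a curve on `[0,1]`. -/
def wind (γ : ℝ → ℂ) : ℝ :=
  if h : ∃ θ, IsLift γ θ then h.choose 1 - h.choose 0 else 0

lemma lift_exp_eq {γ : ℝ → ℂ} {θ : ℝ → ℝ} (hθ : IsLift γ θ) {t : ℝ}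
    (ht : t ∈ Icc (0:ℝ) 1) (hne : γ t ≠ 0) :
    Complex.exp (θ t * Complex.I) = γ t / (‖γ t‖ : ℂ) := by
  have habs : (‖γ t‖ : ℂ) ≠ 0 := by exact_mod_cast norm_ne_zero_iff.2 hne
  rw [eq_div_iff habs, mul_comm]
  exact (hθ.2 t ht).symm

lemma lift_diff_eq {γ : ℝ → ℂ} {θ θ' : ℝ → ℝ} (h0 : ∀ t ∈ Icc (0:ℝ) 1, γ t ≠ 0)
    (hθ : IsLift γ θ) (hθ' : IsLift γ θ') : θ 1 - θ 0 = θ' 1 - θ' 0 := by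
  have key : ∀ t ∈ Icc (0:ℝ) 1, ∃ n : ℤ, θ t - θ' t = 0 + n * (2 * Real.pi) := by
    intro t ht
    have h1 := lift_exp_eq hθ ht (h0 t ht)
    have h2 := lift_exp_eq hθ' ht (h0 t ht)
    rw [← h2] at h1
    obtain ⟨n, hn⟩ := Complex.exp_eq_exp_iff_exists_int.1 h1
    refine ⟨n, ?_⟩
    have h3 : ((θ t - θ' t - n * (2 * Real.pi) : ℝ) : ℂ) * Complex.I = 0 := by
      push_cast
      linear_combination hn
    have h4 : ((θ t - θ' t - n * (2 * Real.pi) : ℝ) : ℂ) = 0 := by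
      rcases mul_eq_zero.1 h3 with h | h
      · exact h
      · exact absurd h Complex.I_ne_zero
    have h5 : θ t - θ' t - n * (2 * Real.pi) = 0 := by exact_mod_cast h4
    linarith
  have hcont : ContinuousOn (fun t => θ t - θ' t) (Icc 0 1) := hθ.1.sub hθ'.1
  have := constancy_helper (by norm_num : (0:ℝ) ≤ 1) Real.two_pi_pos hcont key
  linarith [this]

lemma wind_eq {γ : ℝ → ℂ} {θ : ℝ → ℝ} (h0 : ∀ t ∈ Icc (0:ℝ) 1, γ t ≠ 0)
    (hθ : IsLift γ θ) : wind γ = θ 1 - θ 0 := by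
  rw [wind, dif_pos ⟨θ, hθ⟩]
  exact lift_diff_eq h0 (Exists.choose_spec (⟨θ, hθ⟩ : ∃ θ, IsLift γ θ)) hθ

lemma slitPlane_ne_zero' {z : ℂ} (h : z ∈ Complex.slitPlane) : z ≠ 0 := by
  intro h0
  rw [h0] at h
  simpa using Complex.mem_slitPlane_iff.1 h

lemma wind_slit {γ : ℝ → ℂ} (hc : ContinuousOn γ (Icc 0 1))
    (hs : ∀ t ∈ Icc (0:ℝ) 1, γ t ∈ Complex.slitPlane) (hloop : γ 1 = γ 0) :
    wind γ = 0 := by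
  have h0 : ∀ t ∈ Icc (0:ℝ) 1, γ t ≠ 0 := fun t ht => slitPlane_ne_zero' (hs t ht)
  have hθ : IsLift γ (fun t => Complex.arg (γ t)) := by
    constructor
    · intro t ht
      exact ContinuousAt.comp_continuousWithinAt (g := Complex.arg) (f := γ)
        (Complex.continuousAt_arg (hs t ht)) (hc t ht)
    · intro t ht
      exact (Complex.norm_mul_exp_arg_mul_I (γ t)).symm
  rw [wind_eq h0 hθ, hloop, sub_self]

lemma wind_const_mul {γ : ℝ → ℂ} {c : ℂ} (hc : ContinuousOn γ (Icc 0 1))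
    (h0 : ∀ t ∈ Icc (0:ℝ) 1, γ t ≠ 0) (hcne : c ≠ 0) :
    wind (fun t => c * γ t) = wind γ := by
  obtain ⟨θ, hθ⟩ := exists_lift hc h0
  have h0' : ∀ t ∈ Icc (0:ℝ) 1, c * γ t ≠ 0 := fun t ht => mul_ne_zero hcne (h0 t ht)
  have hθ' : IsLift (fun t => c * γ t) (fun t => θ t + Complex.arg c) := by
    constructor
    · exact hθ.1.add continuousOn_const
    · intro t ht
      have e1 := hθ.2 t ht
      have e2 := Complex.norm_mul_exp_arg_mul_I c
      push_cast
      rw [add_mul, Complex.exp_add, norm_mul]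
      push_cast
      calc c * γ t = (‖c‖ * Complex.exp (Complex.arg c * Complex.I)) *
            ((‖γ t‖ : ℂ) * Complex.exp (θ t * Complex.I)) := by rw [e2, ← e1]
        _ = _ := by ring
  rw [wind_eq h0' hθ', wind_eq h0 hθ]
  ring

lemma wind_perturb {γ γ' : ℝ → ℂ} (hγ : ContinuousOn γ (Icc 0 1))
    (hγ' : ContinuousOn γ' (Icc 0 1)) (h0 : ∀ t ∈ Icc (0:ℝ) 1, γ t ≠ 0)
    (hclose : ∀ t ∈ Icc (0:ℝ) 1, ‖γ' t - γ t‖ < ‖γ t‖)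
    (hloop : γ 1 = γ 0) (hloop' : γ' 1 = γ' 0) : wind γ' = wind γ := by
  have h0' : ∀ t ∈ Icc (0:ℝ) 1, γ' t ≠ 0 := by
    intro t ht h
    have h1 := hclose t ht
    rw [h, zero_sub, norm_neg] at h1
    exact lt_irrefl _ h1
  set δ : ℝ → ℂ := fun t => γ' t / γ t with hδ_def
  have hδslit : ∀ t ∈ Icc (0:ℝ) 1, δ t ∈ Complex.slitPlane := by
    intro t ht
    apply ball_one_subset_slitPlane
    have : δ t - 1 = (γ' t - γ t) / γ t := by
      simp only [hδ_def]
      rw [div_sub_one (h0 t ht)]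
    rw [this, norm_div, div_lt_one (norm_pos_iff.2 (h0 t ht))]
    exact hclose t ht
  have hδc : ContinuousOn δ (Icc 0 1) := hγ'.div hγ h0
  obtain ⟨θ, hθ⟩ := exists_lift hγ h0
  have hθ' : IsLift γ' (fun t => θ t + Complex.arg (δ t)) := by
    constructor
    · refine hθ.1.add ?_
      intro t ht
      exact ContinuousAt.comp_continuousWithinAt (g := Complex.arg) (f := δ)
        (Complex.continuousAt_arg (hδslit t ht)) (hδc t ht)
    · intro t ht
      have hδne : δ t ≠ 0 := slitPlane_ne_zero' (hδslit t ht)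
      have e1 := hθ.2 t ht
      have e2 := Complex.norm_mul_exp_arg_mul_I (δ t)
      have e3 : γ' t = γ t * δ t := by
        simp only [hδ_def]
        exact (mul_div_cancel₀ _ (h0 t ht)).symm
      push_cast
      rw [add_mul, Complex.exp_add]
      calc γ' t = γ t * δ t := e3
        _ = ((‖γ t‖ : ℂ) * Complex.exp (θ t * Complex.I)) *
            ((‖δ t‖ : ℂ) * Complex.exp (Complex.arg (δ t) * Complex.I)) := by
              rw [← e1, e2]
        _ = ((‖γ t‖ : ℂ) * (‖δ t‖ : ℂ)) *
              (Complex.exp (θ t * Complex.I) * Complex.exp (Complex.arg (δ t) * Complex.I)) := by ring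
        _ = _ := by
              rw [e3, norm_mul]
              push_cast
              ring
  have hδloop : δ 1 = δ 0 := by rw [hδ_def]; simp only; rw [hloop, hloop']
  rw [wind_eq h0' hθ', wind_eq h0 hθ, hδloop]
  ring

/-- Homotopy invariance of the winding number. -/
lemma wind_homotopy {H : ℝ → ℝ → ℂ} (hH : Continuous fun p : ℝ × ℝ => H p.1 p.2)
    (h0 : ∀ s ∈ Icc (0:ℝ) 1, ∀ t ∈ Icc (0:ℝ) 1, H s t ≠ 0)
    (hloop : ∀ s ∈ Icc (0:ℝ) 1, H s 1 = H s 0) : wind (H 1) = wind (H 0) := by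
  set K : Set (ℝ × ℝ) := Icc (0:ℝ) 1 ×ˢ Icc (0:ℝ) 1 with hK_def
  have hKc : IsCompact K := isCompact_Icc.prod isCompact_Icc
  have habs : ContinuousOn (fun p : ℝ × ℝ => ‖H p.1 p.2‖) K :=
    (continuous_norm.comp hH).continuousOn
  obtain ⟨p₀, hp₀, hmin'⟩ := hKc.exists_isMinOn ⟨(0,0), by simp [hK_def]⟩ habs
  set m : ℝ := ‖H p₀.1 p₀.2‖ with hm_def
  have hmin : ∀ p ∈ K, m ≤ ‖H p.1 p.2‖ := fun p hp => hmin' hp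
  have hm : 0 < m := norm_pos_iff.2 (h0 p₀.1 hp₀.1 p₀.2 hp₀.2)
  have hu := hKc.uniformContinuousOn_of_continuous hH.continuousOn
  rw [Metric.uniformContinuousOn_iff] at hu
  obtain ⟨δ, hδ, hδ'⟩ := hu m hm
  obtain ⟨n, hn⟩ := exists_nat_gt (1 / δ)
  have hnpos : 0 < (n : ℝ) := lt_trans (by positivity) hn
  have hstep : (1 : ℝ) / n < δ := by
    rw [div_lt_iff₀ hnpos]
    rw [div_lt_iff₀ hδ] at hn
    linarith
  have hsc : ∀ s : ℝ, ContinuousOn (H s) (Icc 0 1) :=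
    fun s => (hH.comp (Continuous.prodMk continuous_const continuous_id)).continuousOn
  have step : ∀ s ∈ Icc (0:ℝ) 1, ∀ s' ∈ Icc (0:ℝ) 1, |s' - s| ≤ 1/n →
      wind (H s') = wind (H s) := by
    intro s hs s' hs' hss
    apply wind_perturb (hsc s) (hsc s') (fun t ht => h0 s hs t ht) ?_
      (hloop s hs) (hloop s' hs')
    intro t ht
    have hpair : ((s', t) : ℝ × ℝ) ∈ K := ⟨hs', ht⟩
    have hpair' : ((s, t) : ℝ × ℝ) ∈ K := ⟨hs, ht⟩
    have hdp : dist ((s', t) : ℝ × ℝ) ((s, t) : ℝ × ℝ) < δ := by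
      rw [Prod.dist_eq]
      simp only [dist_self]
      rw [Real.dist_eq]
      have : max |s' - s| (0:ℝ) = |s' - s| := max_eq_left (abs_nonneg _)
      rw [this]
      exact lt_of_le_of_lt hss hstep
    have hd := hδ' _ hpair _ hpair' hdp
    have hd' : ‖H s' t - H s t‖ < m := by
      rw [Complex.dist_eq] at hd
      exact hd
    exact lt_of_lt_of_le hd' (hmin (s, t) hpair')
  have key : ∀ k : ℕ, k ≤ n → wind (H ((k : ℝ)/n)) = wind (H 0) := by
    intro k
    induction k with
    | zero => intro _; norm_num
    | succ k ih =>
      intro hk1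
      have hk' : k ≤ n := le_of_lt (Nat.lt_of_succ_le hk1)
      have hcast : (((k+1 : ℕ)):ℝ)/n = ((k:ℝ)+1)/n := by push_cast; ring
      rw [hcast]
      have hmem : ((k:ℝ)/n) ∈ Icc (0:ℝ) 1 :=
        ⟨by positivity, by rw [div_le_one hnpos]; exact_mod_cast hk'⟩
      have hmem' : (((k:ℝ)+1)/n) ∈ Icc (0:ℝ) 1 := by
        constructor
        · positivity
        · rw [div_le_one hnpos]; exact_mod_cast hk1
      have hdist : |((k:ℝ)+1)/n - (k:ℝ)/n| ≤ 1/n := by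
        have : ((k:ℝ)+1)/n - (k:ℝ)/n = 1/n := by field_simp; ring
        rw [this, abs_of_nonneg (by positivity)]
      rw [step ((k:ℝ)/n) hmem (((k:ℝ)+1)/n) hmem' hdist]
      exact ih hk'
  have := key n le_rfl
  rwa [div_self (ne_of_gt hnpos)] at this

/-- Borsuk: an antipodal loop has nonzero winding. -/
lemma wind_antipodal_ne_zero {γ : ℝ → ℂ} (hc : ContinuousOn γ (Icc 0 1))
    (h0 : ∀ t ∈ Icc (0:ℝ) 1, γ t ≠ 0)
    (hanti : ∀ t ∈ Icc (0:ℝ) (1/2), γ (t + 1/2) = - γ t) : wind γ ≠ 0 := by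
  obtain ⟨θ, hθ⟩ := exists_lift hc h0
  have hmem : ∀ t ∈ Icc (0:ℝ) (1/2), t ∈ Icc (0:ℝ) 1 := fun t ht => ⟨ht.1, by linarith [ht.2]⟩
  have hmem' : ∀ t ∈ Icc (0:ℝ) (1/2), t + 1/2 ∈ Icc (0:ℝ) 1 :=
    fun t ht => ⟨by linarith [ht.1], by linarith [ht.2]⟩
  have hval : ∀ t ∈ Icc (0:ℝ) (1/2), ∃ k : ℤ,
      θ (t + 1/2) - θ t = Real.pi + k * (2 * Real.pi) := by
    intro t ht
    have e1 := hθ.2 (t + 1/2) (hmem' t ht)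
    have e2 := hθ.2 t (hmem t ht)
    have habs : ‖γ (t + 1/2)‖ = ‖γ t‖ := by
      rw [hanti t ht, norm_neg]
    have hne : (‖γ t‖ : ℂ) ≠ 0 := by
      exact_mod_cast norm_ne_zero_iff.2 (h0 t (hmem t ht))
    have h1 : ((‖γ t‖) : ℂ) * Complex.exp (θ (t + 1/2) * Complex.I)
        = -(((‖γ t‖) : ℂ) * Complex.exp (θ t * Complex.I)) := by
      calc ((‖γ t‖) : ℂ) * Complex.exp (θ (t + 1/2) * Complex.I)
          = ((‖γ (t + 1/2)‖) : ℂ) * Complex.exp (θ (t + 1/2) * Complex.I) := by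
            rw [habs]
        _ = γ (t + 1/2) := e1.symm
        _ = -γ t := hanti t ht
        _ = -(((‖γ t‖) : ℂ) * Complex.exp (θ t * Complex.I)) := by rw [← e2]
    have h2 : Complex.exp (θ (t + 1/2) * Complex.I) = -Complex.exp (θ t * Complex.I) :=
      mul_left_cancel₀ hne (by linear_combination h1)
    have e3 : Complex.exp (θ (t + 1/2) * Complex.I)
        = Complex.exp (θ t * Complex.I + Real.pi * Complex.I) := by
      rw [Complex.exp_add, Complex.exp_pi_mul_I, h2]
      ring
    obtain ⟨k, hk⟩ := Complex.exp_eq_exp_iff_exists_int.1 e3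
    refine ⟨k, ?_⟩
    have h3 : ((θ (t + 1/2) - θ t - Real.pi - k * (2 * Real.pi) : ℝ) : ℂ) * Complex.I = 0 := by
      push_cast
      linear_combination hk
    have h4 : ((θ (t + 1/2) - θ t - Real.pi - k * (2 * Real.pi) : ℝ) : ℂ) = 0 := by
      rcases mul_eq_zero.1 h3 with h | h
      · exact h
      · exact absurd h Complex.I_ne_zero
    have h5 : θ (t + 1/2) - θ t - Real.pi - k * (2 * Real.pi) = 0 := by exact_mod_cast h4
    linarith
  have hdc : ContinuousOn (fun t => θ (t + 1/2) - θ t) (Icc 0 (1/2)) := by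
    apply ContinuousOn.sub
    · apply hθ.1.comp (Continuous.continuousOn (by continuity))
      intro t ht
      exact hmem' t ht
    · exact hθ.1.mono (fun t ht => hmem t ht)
  have hconst := constancy_helper (by norm_num : (0:ℝ) ≤ 1/2) Real.two_pi_pos hdc
    (by intro t ht; obtain ⟨k, hk⟩ := hval t ht; exact ⟨k, by linarith⟩)
  have hconst' : θ (1/2 + 1/2) - θ (1/2) = θ (0 + 1/2) - θ 0 := hconst
  have h12 : (1:ℝ)/2 + 1/2 = 1 := by norm_num
  have h02 : (0:ℝ) + 1/2 = 1/2 := by norm_num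
  rw [h12, h02] at hconst'
  obtain ⟨k₀, hk₀⟩ := hval 0 (by norm_num)
  rw [h02] at hk₀
  have hw : wind γ = θ 1 - θ 0 := wind_eq h0 hθ
  intro hcontra
  rw [hw] at hcontra
  have hzero : (2 * (k₀:ℝ) + 1) * Real.pi = 0 := by
    linear_combination (1/2) * hcontra - (1/2) * hconst' - hk₀
  rcases mul_eq_zero.1 hzero with h | h
  · have : (2 * k₀ + 1 : ℤ) = 0 := by exact_mod_cast h
    omega
  · exact absurd h (ne_of_gt Real.pi_pos)

/-- Identify `ℝ × ℝ` with `ℂ`. -/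
def toC (p : ℝ × ℝ) : ℂ := p.1 + p.2 * Complex.I

lemma toC_re (p : ℝ × ℝ) : (toC p).re = p.1 := by simp [toC]

lemma toC_im (p : ℝ × ℝ) : (toC p).im = p.2 := by simp [toC]

lemma toC_continuous : Continuous toC := by
  unfold toC
  fun_prop

lemma toC_sub_ne_zero {a b : ℝ × ℝ} (h : a ≠ b) : toC a - toC b ≠ 0 := by
  intro hc
  apply h
  have h1 : (toC a - toC b).re = 0 := by rw [hc]; simp
  have h2 : (toC a - toC b).im = 0 := by rw [hc]; simp
  rw [Complex.sub_re, toC_re, toC_re, sub_eq_zero] at h1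
  rw [Complex.sub_im, toC_im, toC_im, sub_eq_zero] at h2
  exact Prod.ext h1 h2

lemma combo_le {x y c s : ℝ} (hx : x ≤ c) (hy : y ≤ c) (h0 : 0 ≤ s) (h1 : s ≤ 1) :
    (1 - s) * x + s * y ≤ c := by nlinarith

lemma combo_ge {x y c s : ℝ} (hx : c ≤ x) (hy : c ≤ y) (h0 : 0 ≤ s) (h1 : s ≤ 1) :
    c ≤ (1 - s) * x + s * y := by nlinarith

/-- The key case: an interior image point in the upper half-strip leads to a contradiction. -/
lemma key_upper (f : ℝ × ℝ → ℝ × ℝ) (hf : ContinuousOn f unitSquare)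
    (hinj : Set.InjOn f unitSquare)
    (hbd : f '' frontier unitSquare ∩ halfStrips = ∅)
    (z₀ : ℝ × ℝ) (hz₀ : z₀ ∈ unitSquare)
    (hup1 : (f z₀).1 ∈ Icc (-1:ℝ) 1) (hup2 : 1 ≤ (f z₀).2) : False := by
  have hQclosed : IsClosed unitSquare := isClosed_Icc.prod isClosed_Icc
  have hbd' : ∀ x ∈ frontier unitSquare, f x ∉ halfStrips := by
    intro x hx hmem
    have : f x ∈ f '' frontier unitSquare ∩ halfStrips := ⟨mem_image_of_mem f hx, hmem⟩
    rw [hbd] at this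
    exact this
  have hint : interior unitSquare = Ioo (-1:ℝ) 1 ×ˢ Ioo (-1:ℝ) 1 := by
    rw [unitSquare, interior_prod_eq, interior_Icc]
  have hfr_mem : ∀ p ∈ unitSquare, (p.1 = 1 ∨ p.1 = -1 ∨ p.2 = 1 ∨ p.2 = -1) →
      p ∈ frontier unitSquare := by
    intro p hp hcase
    rw [hQclosed.frontier_eq]
    refine ⟨hp, ?_⟩
    rw [hint]
    intro hmem
    obtain ⟨h1, h2⟩ := hmem
    rcases hcase with h | h | h | h
    · exact absurd h1.2 (by rw [h]; exact lt_irrefl 1)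
    · exact absurd h1.1 (by rw [h]; exact lt_irrefl (-1))
    · exact absurd h2.2 (by rw [h]; exact lt_irrefl 1)
    · exact absurd h2.1 (by rw [h]; exact lt_irrefl (-1))
  -- z₀ is in the interior
  have hz₀T : f z₀ ∈ halfStrips := by
    refine ⟨hup1, ?_⟩
    intro hIoo
    exact absurd hIoo.2 (not_lt.2 hup2)
  have hz₀fr : z₀ ∉ frontier unitSquare := fun h => hbd' z₀ h hz₀T
  have hz₀int : z₀ ∈ interior unitSquare := by
    rw [hQclosed.frontier_eq] at hz₀fr
    by_contra h
    exact hz₀fr ⟨hz₀, h⟩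
  obtain ⟨δ, hδpos, hδball⟩ := Metric.isOpen_iff.1 isOpen_interior z₀ hz₀int
  set ε : ℝ := δ/2 with hε_def
  have hεpos : 0 < ε := by positivity
  have hball : ∀ p : ℝ × ℝ, dist p z₀ ≤ ε → p ∈ unitSquare :=
    fun p hp => interior_subset (hδball (lt_of_le_of_lt hp (by rw [hε_def]; linarith)))
  have hz₀bounds : -1 < z₀.1 ∧ z₀.1 < 1 ∧ -1 < z₀.2 ∧ z₀.2 < 1 := by
    rw [hint] at hz₀int
    exact ⟨hz₀int.1.1, hz₀int.1.2, hz₀int.2.1, hz₀int.2.2⟩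
  obtain ⟨ha2', ha1', hb2', hb1'⟩ := hz₀bounds
  set a1 : ℝ := 1 - z₀.1 with ha1_def
  set a2 : ℝ := 1 + z₀.1 with ha2_def
  set b1 : ℝ := 1 - z₀.2 with hb1_def
  set b2 : ℝ := 1 + z₀.2 with hb2_def
  have ha1 : 0 < a1 := by rw [ha1_def]; linarith
  have ha2 : 0 < a2 := by rw [ha2_def]; linarith
  have hb1 : 0 < b1 := by rw [hb1_def]; linarith
  have hb2 : 0 < b2 := by rw [hb2_def]; linarith
  -- the direction vector
  set v : ℝ → ℝ × ℝ := fun t => (Real.cos (2*Real.pi*t), Real.sin (2*Real.pi*t)) with hv_def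
  have hv_sq : ∀ t, (v t).1^2 + (v t).2^2 = 1 := by
    intro t; rw [hv_def]; exact Real.cos_sq_add_sin_sq _
  have hv_ne : ∀ t, v t ≠ (0, 0) := by
    intro t h
    have := hv_sq t
    rw [h] at this
    norm_num at this
  have hv_b1 : ∀ t, |(v t).1| ≤ 1 := fun t => Real.abs_cos_le_one _
  have hv_b2 : ∀ t, |(v t).2| ≤ 1 := fun t => Real.abs_sin_le_one _
  have hv_cont1 : Continuous fun t => (v t).1 := by rw [hv_def]; fun_prop
  have hv_cont2 : Continuous fun t => (v t).2 := by rw [hv_def]; fun_prop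
  have hv_loop : v 1 = v 0 := by
    rw [hv_def]
    simp [Real.cos_two_pi, Real.sin_two_pi]
  have hv_anti : ∀ t, v (t + 1/2) = (-(v t).1, -(v t).2) := by
    intro t
    rw [hv_def]
    have harg : 2*Real.pi*(t + 1/2) = 2*Real.pi*t + Real.pi := by ring
    simp only [harg]
    rw [Real.cos_add_pi, Real.sin_add_pi]
  -- base points
  set pt : ℝ → ℝ → ℝ × ℝ := fun c t => (z₀.1 + c * (v t).1, z₀.2 + c * (v t).2) with hpt_def
  have hpt_mem : ∀ c t, |c| ≤ ε → pt c t ∈ unitSquare := by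
    intro c t hc
    apply hball
    rw [hpt_def]
    simp only [Prod.dist_eq, Real.dist_eq]
    apply max_le
    · rw [add_sub_cancel_left, abs_mul]
      calc |c| * |(v t).1| ≤ |c| * 1 := by
            exact mul_le_mul_of_nonneg_left (hv_b1 t) (abs_nonneg c)
        _ ≤ ε := by rw [mul_one]; exact hc
    · rw [add_sub_cancel_left, abs_mul]
      calc |c| * |(v t).2| ≤ |c| * 1 := by
            exact mul_le_mul_of_nonneg_left (hv_b2 t) (abs_nonneg c)
        _ ≤ ε := by rw [mul_one]; exact hc
  have hpt_ne : ∀ c t, c ≠ 0 → pt c t ≠ z₀ := by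
    intro c t hc h
    apply hv_ne t
    rw [hpt_def] at h
    have h1 : z₀.1 + c * (v t).1 = z₀.1 := congrArg Prod.fst h
    have h2 : z₀.2 + c * (v t).2 = z₀.2 := congrArg Prod.snd h
    have e1 : (v t).1 = 0 := by
      have : c * (v t).1 = 0 := by linarith
      exact (mul_eq_zero.1 this).resolve_left hc
    have e2 : (v t).2 = 0 := by
      have : c * (v t).2 = 0 := by linarith
      exact (mul_eq_zero.1 this).resolve_left hc
    exact Prod.ext e1 e2
  have hpt_loop : ∀ c, pt c 1 = pt c 0 := by
    intro c
    rw [hpt_def]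
    simp [hv_loop, mul_one, mul_zero, Real.cos_two_pi, Real.sin_two_pi, Real.cos_zero, Real.sin_zero]
  -- the gauge function: radial distance to the boundary from z₀
  set hfun : ℝ → ℝ := fun t =>
    max (max ((v t).1 / a1) (-(v t).1 / a2)) (max ((v t).2 / b1) (-(v t).2 / b2)) with hfun_def
  have hfun_ge1 : ∀ t, (v t).1 / a1 ≤ hfun t :=
    fun t => le_trans (le_max_left _ _) (le_max_left _ _)
  have hfun_ge2 : ∀ t, -(v t).1 / a2 ≤ hfun t :=
    fun t => le_trans (le_max_right _ _) (le_max_left _ _)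
  have hfun_ge3 : ∀ t, (v t).2 / b1 ≤ hfun t :=
    fun t => le_trans (le_max_left _ _) (le_max_right _ _)
  have hfun_ge4 : ∀ t, -(v t).2 / b2 ≤ hfun t :=
    fun t => le_trans (le_max_right _ _) (le_max_right _ _)
  have hfun_pos : ∀ t, 0 < hfun t := by
    intro t
    rcases lt_trichotomy ((v t).1) 0 with h | h | h
    · exact lt_of_lt_of_le (div_pos (by linarith) ha2) (hfun_ge2 t)
    · have h2 : (v t).2 ≠ 0 := by
        intro h2
        exact hv_ne t (Prod.ext h h2)
      rcases lt_or_gt_of_ne h2 with h3 | h3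
      · exact lt_of_lt_of_le (div_pos (by linarith) hb2) (hfun_ge4 t)
      · exact lt_of_lt_of_le (div_pos (by linarith) hb1) (hfun_ge3 t)
    · exact lt_of_lt_of_le (div_pos (by linarith) ha1) (hfun_ge1 t)
  have hfun_cont : Continuous hfun := by
    rw [hfun_def]
    exact ((hv_cont1.div_const a1).max ((hv_cont1.neg).div_const a2)).max
      ((hv_cont2.div_const b1).max ((hv_cont2.neg).div_const b2))
  -- bounds for the radial point
  have hrad_le1 : ∀ t, (hfun t)⁻¹ * (v t).1 ≤ a1 := by
    intro t
    rw [inv_mul_le_iff₀ (hfun_pos t)]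
    have := (div_le_iff₀ ha1).1 (hfun_ge1 t)
    linarith
  have hrad_le2 : ∀ t, -a2 ≤ (hfun t)⁻¹ * (v t).1 := by
    intro t
    have h1 : (hfun t)⁻¹ * (-(v t).1) ≤ a2 := by
      rw [inv_mul_le_iff₀ (hfun_pos t)]
      have := (div_le_iff₀ ha2).1 (hfun_ge2 t)
      linarith
    linarith
  have hrad_le3 : ∀ t, (hfun t)⁻¹ * (v t).2 ≤ b1 := by
    intro t
    rw [inv_mul_le_iff₀ (hfun_pos t)]
    have := (div_le_iff₀ hb1).1 (hfun_ge3 t)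
    linarith
  have hrad_le4 : ∀ t, -b2 ≤ (hfun t)⁻¹ * (v t).2 := by
    intro t
    have h1 : (hfun t)⁻¹ * (-(v t).2) ≤ b2 := by
      rw [inv_mul_le_iff₀ (hfun_pos t)]
      have := (div_le_iff₀ hb2).1 (hfun_ge4 t)
      linarith
    linarith
  have hPout_mem : ∀ t, pt ((hfun t)⁻¹) t ∈ unitSquare := by
    intro t
    rw [hpt_def]
    constructor
    · constructor
      · have := hrad_le2 t; rw [ha2_def] at this; simp only; linarith
      · have := hrad_le1 t; rw [ha1_def] at this; simp only; linarith
    · constructor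
      · have := hrad_le4 t; rw [hb2_def] at this; simp only; linarith
      · have := hrad_le3 t; rw [hb1_def] at this; simp only; linarith
  have hPout_fr : ∀ t, pt ((hfun t)⁻¹) t ∈ frontier unitSquare := by
    intro t
    apply hfr_mem _ (hPout_mem t)
    have hchoice : hfun t = (v t).1 / a1 ∨ hfun t = -(v t).1 / a2 ∨
        hfun t = (v t).2 / b1 ∨ hfun t = -(v t).2 / b2 := by
      rw [hfun_def]
      simp only
      rcases max_choice (max ((v t).1 / a1) (-(v t).1 / a2)) (max ((v t).2 / b1) (-(v t).2 / b2))
        with h | h <;> rw [h]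
      · rcases max_choice ((v t).1 / a1) (-(v t).1 / a2) with h' | h' <;> rw [h']
        · exact Or.inl rfl
        · exact Or.inr (Or.inl rfl)
      · rcases max_choice ((v t).2 / b1) (-(v t).2 / b2) with h' | h' <;> rw [h']
        · exact Or.inr (Or.inr (Or.inl rfl))
        · exact Or.inr (Or.inr (Or.inr rfl))
    rcases hchoice with h | h | h | h
    · left
      rw [hpt_def]
      simp only
      have hm : hfun t * a1 = (v t).1 := by
        rw [h]; field_simp
      have : (hfun t)⁻¹ * (v t).1 = a1 := by
        rw [inv_mul_eq_iff_eq_mul₀ (ne_of_gt (hfun_pos t))]; linarith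
      rw [this, ha1_def]; ring
    · right; left
      rw [hpt_def]
      simp only
      have hm : hfun t * a2 = -(v t).1 := by
        rw [h]; field_simp
      have : (hfun t)⁻¹ * (v t).1 = -a2 := by
        rw [inv_mul_eq_iff_eq_mul₀ (ne_of_gt (hfun_pos t)), mul_neg]; linarith
      rw [this, ha2_def]; ring
    · right; right; left
      rw [hpt_def]
      simp only
      have hm : hfun t * b1 = (v t).2 := by
        rw [h]; field_simp
      have : (hfun t)⁻¹ * (v t).2 = b1 := by
        rw [inv_mul_eq_iff_eq_mul₀ (ne_of_gt (hfun_pos t))]; linarith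
      rw [this, hb1_def]; ring
    · right; right; right
      rw [hpt_def]
      simp only
      have hm : hfun t * b2 = -(v t).2 := by
        rw [h]; field_simp
      have : (hfun t)⁻¹ * (v t).2 = -b2 := by
        rw [inv_mul_eq_iff_eq_mul₀ (ne_of_gt (hfun_pos t)), mul_neg]; linarith
      rw [this, hb2_def]; ring
  -- the clamp function and coefficient
  set clamp : ℝ → ℝ := fun s => max 0 (min 1 s) with hclamp_def
  have hclamp_mem : ∀ s, clamp s ∈ Icc (0:ℝ) 1 := by
    intro s
    constructor
    · exact le_max_left _ _
    · apply max_le (by norm_num) (min_le_left _ _)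
  have hclamp0 : clamp 0 = 0 := by rw [hclamp_def]; norm_num
  have hclamp1 : clamp 1 = 1 := by rw [hclamp_def]; norm_num
  have hclamp_cont : Continuous clamp := by
    rw [hclamp_def]
    exact continuous_const.max (continuous_const.min continuous_id)
  set coef : ℝ → ℝ → ℝ := fun s t => (1 - clamp s) * (hfun t)⁻¹ + clamp s * ε with hcoef_def
  have hcoef_pos : ∀ s t, 0 < coef s t := by
    intro s t
    have h1 : min ((hfun t)⁻¹) ε ≤ coef s t :=
      combo_ge (min_le_left _ _) (min_le_right _ _) (hclamp_mem s).1 (hclamp_mem s).2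
    exact lt_of_lt_of_le (lt_min (inv_pos.2 (hfun_pos t)) hεpos) h1
  have hεmem : ∀ t, pt ε t ∈ unitSquare := by
    intro t
    apply hpt_mem
    rw [abs_of_pos hεpos]
  -- explicit coordinate bounds
  have houtb : ∀ t, -1 ≤ z₀.1 + (hfun t)⁻¹ * (v t).1 ∧ z₀.1 + (hfun t)⁻¹ * (v t).1 ≤ 1 ∧
      -1 ≤ z₀.2 + (hfun t)⁻¹ * (v t).2 ∧ z₀.2 + (hfun t)⁻¹ * (v t).2 ≤ 1 := by
    intro t
    obtain ⟨⟨o1, o2⟩, ⟨o3, o4⟩⟩ := hPout_mem t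
    exact ⟨o1, o2, o3, o4⟩
  have hinb : ∀ t, -1 ≤ z₀.1 + ε * (v t).1 ∧ z₀.1 + ε * (v t).1 ≤ 1 ∧
      -1 ≤ z₀.2 + ε * (v t).2 ∧ z₀.2 + ε * (v t).2 ≤ 1 := by
    intro t
    obtain ⟨⟨o1, o2⟩, ⟨o3, o4⟩⟩ := hεmem t
    exact ⟨o1, o2, o3, o4⟩
  have hcoef_mem : ∀ s t, pt (coef s t) t ∈ unitSquare := by
    intro s t
    obtain ⟨p1, p2, p3, p4⟩ := houtb t
    obtain ⟨q1, q2, q3, q4⟩ := hinb t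
    have hs0 := (hclamp_mem s).1
    have hs1 := (hclamp_mem s).2
    have key1 : z₀.1 + coef s t * (v t).1 =
        (1 - clamp s) * (z₀.1 + (hfun t)⁻¹ * (v t).1) + clamp s * (z₀.1 + ε * (v t).1) := by
      rw [hcoef_def]; ring
    have key2 : z₀.2 + coef s t * (v t).2 =
        (1 - clamp s) * (z₀.2 + (hfun t)⁻¹ * (v t).2) + clamp s * (z₀.2 + ε * (v t).2) := by
      rw [hcoef_def]; ring
    constructor
    · constructor
      · show -1 ≤ z₀.1 + coef s t * (v t).1
        exact le_of_le_of_eq (combo_ge p1 q1 hs0 hs1) key1.symm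
      · show z₀.1 + coef s t * (v t).1 ≤ 1
        exact le_of_eq_of_le key1 (combo_le p2 q2 hs0 hs1)
    · constructor
      · show -1 ≤ z₀.2 + coef s t * (v t).2
        exact le_of_le_of_eq (combo_ge p3 q3 hs0 hs1) key2.symm
      · show z₀.2 + coef s t * (v t).2 ≤ 1
        exact le_of_eq_of_le key2 (combo_le p4 q4 hs0 hs1)
  -- the center image
  set W : ℂ := toC (f z₀) with hW_def
  -- generic nonvanishing
  have hne_gen : ∀ c t : ℝ, c ≠ 0 → pt c t ∈ unitSquare → toC (f (pt c t)) - W ≠ 0 := by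
    intro c t hc hmem
    rw [hW_def]
    apply toC_sub_ne_zero
    intro hEq
    exact hpt_ne c t hc (hinj hmem hz₀ hEq)
  -- two-point nonvanishing (for the Borsuk homotopy)
  have hne_two : ∀ c c' t : ℝ, c ≠ c' → pt c t ∈ unitSquare → pt c' t ∈ unitSquare →
      toC (f (pt c t)) - toC (f (pt c' t)) ≠ 0 := by
    intro c c' t hcc hm hm'
    apply toC_sub_ne_zero
    intro hEq
    have := hinj hm hm' hEq
    rw [hpt_def] at this
    have h1 : z₀.1 + c * (v t).1 = z₀.1 + c' * (v t).1 := congrArg Prod.fst this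
    have h2 : z₀.2 + c * (v t).2 = z₀.2 + c' * (v t).2 := congrArg Prod.snd this
    have e1 : (c - c') * (v t).1 = 0 := by linarith
    have e2 : (c - c') * (v t).2 = 0 := by linarith
    have hsub : c - c' ≠ 0 := sub_ne_zero.2 hcc
    apply hv_ne t
    exact Prod.ext ((mul_eq_zero.1 e1).resolve_left hsub) ((mul_eq_zero.1 e2).resolve_left hsub)
  -- continuity of curve families
  have hpt_cont2 : ∀ g : ℝ × ℝ → ℝ, Continuous g →
      Continuous (fun p : ℝ × ℝ => pt (g p) p.2) := by
    intro g hg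
    rw [hpt_def]
    exact (continuous_const.add (hg.mul (hv_cont1.comp continuous_snd))).prodMk
      (continuous_const.add (hg.mul (hv_cont2.comp continuous_snd)))
  have hF2 : ∀ g : ℝ × ℝ → ℝ, Continuous g → (∀ p : ℝ × ℝ, pt (g p) p.2 ∈ unitSquare) →
      Continuous (fun p : ℝ × ℝ => toC (f (pt (g p) p.2)) ) := by
    intro g hg hmem
    exact toC_continuous.comp (hf.comp_continuous (hpt_cont2 g hg) hmem)
  have hpt_cont1 : ∀ g : ℝ → ℝ, Continuous g →
      Continuous (fun t : ℝ => pt (g t) t) := by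
    intro g hg
    rw [hpt_def]
    exact (continuous_const.add (hg.mul hv_cont1)).prodMk
      (continuous_const.add (hg.mul hv_cont2))
  have hF1 : ∀ g : ℝ → ℝ, Continuous g → (∀ t : ℝ, pt (g t) t ∈ unitSquare) →
      Continuous (fun t : ℝ => toC (f (pt (g t) t)) ) := by
    intro g hg hmem
    exact toC_continuous.comp (hf.comp_continuous (hpt_cont1 g hg) hmem)
  -- loops
  have hfun_loop : hfun 1 = hfun 0 :=
    congrArg (fun w : ℝ × ℝ => max (max (w.1 / a1) (-w.1 / a2)) (max (w.2 / b1) (-w.2 / b2)))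
      hv_loop
  -- the curves
  set γout : ℝ → ℂ := fun t => toC (f (pt ((hfun t)⁻¹) t)) - W with hγout_def
  set γin : ℝ → ℂ := fun t => toC (f (pt ε t)) - W with hγin_def
  set φ : ℝ → ℂ := fun t => toC (f (pt ε t)) - toC (f (pt (-ε) t)) with hφ_def
  set H1 : ℝ → ℝ → ℂ := fun s t => toC (f (pt (coef s t) t)) - W with hH1_def
  set H2 : ℝ → ℝ → ℂ := fun s t =>
    toC (f (pt ε t)) - toC (f (pt (-(clamp s * ε)) t)) with hH2_def
  -- continuity facts
  have hγout_cont : Continuous γout := by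
    rw [hγout_def]
    exact (hF1 _ (hfun_cont.inv₀ (fun t => ne_of_gt (hfun_pos t))) hPout_mem).sub continuous_const
  have hγin_cont : Continuous γin := by
    rw [hγin_def]
    exact (hF1 _ continuous_const hεmem).sub continuous_const
  have hφ_cont : Continuous φ := by
    rw [hφ_def]
    apply Continuous.sub
    · exact hF1 _ continuous_const hεmem
    · apply hF1 _ continuous_const
      intro t
      apply hpt_mem
      rw [abs_neg, abs_of_pos hεpos]
  -- nonvanishing facts
  have hγout_ne : ∀ t, γout t ≠ 0 := by
    intro t
    rw [hγout_def]
    exact hne_gen _ t (ne_of_gt (inv_pos.2 (hfun_pos t))) (hPout_mem t)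
  have hγin_ne : ∀ t, γin t ≠ 0 := by
    intro t
    rw [hγin_def]
    exact hne_gen _ t (ne_of_gt hεpos) (hεmem t)
  -- loops
  have hγout_loop : γout 1 = γout 0 := by
    rw [hγout_def]
    simp only [hfun_loop, hpt_loop]
  have hγin_loop : γin 1 = γin 0 := by
    rw [hγin_def]
    simp only [hpt_loop]
  -- Step 1 : wind γout = 0
  have hstep1 : wind γout = 0 := by
    have hslit : ∀ t ∈ Icc (0:ℝ) 1, Complex.I * γout t ∈ Complex.slitPlane := by
      intro t _
      rw [Complex.mem_slitPlane_iff]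
      by_contra hcon
      push_neg at hcon
      obtain ⟨h1, h2⟩ := hcon
      have hre : (Complex.I * γout t).re = -(γout t).im := by
        simp [Complex.mul_re]
      have him : (Complex.I * γout t).im = (γout t).re := by
        simp [Complex.mul_im]
      rw [hre] at h1
      rw [him] at h2
      have hgre : (γout t).re = (f (pt ((hfun t)⁻¹) t)).1 - (f z₀).1 := by
        rw [hγout_def]
        simp only [Complex.sub_re, hW_def, toC_re]
      have hgim : (γout t).im = (f (pt ((hfun t)⁻¹) t)).2 - (f z₀).2 := by
        rw [hγout_def]
        simp only [Complex.sub_im, hW_def, toC_im]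
      rw [hgre] at h2
      rw [hgim] at h1
      have hmemT : f (pt ((hfun t)⁻¹) t) ∈ halfStrips := by
        constructor
        · have : (f (pt ((hfun t)⁻¹) t)).1 = (f z₀).1 := by linarith
          rw [this]
          exact hup1
        · intro hIoo
          have : (f (pt ((hfun t)⁻¹) t)).2 ≥ 1 := by linarith
          exact absurd hIoo.2 (not_lt.2 this)
      exact hbd' _ (hPout_fr t) hmemT
    have h1 : wind (fun t => Complex.I * γout t) = wind γout :=
      wind_const_mul hγout_cont.continuousOn (fun t _ => hγout_ne t) Complex.I_ne_zero
    have h2 : wind (fun t => Complex.I * γout t) = 0 := by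
      apply wind_slit ((continuous_const.mul hγout_cont).continuousOn) hslit
      exact congrArg (fun w => Complex.I * w) hγout_loop
    rw [← h1, h2]
  -- Step 2 : wind γin = wind γout via H1
  have hH1cont : Continuous fun p : ℝ × ℝ => H1 p.1 p.2 := by
    rw [hH1_def]
    refine Continuous.sub ?_ continuous_const
    apply hF2 (fun p => coef p.1 p.2)
    · rw [hcoef_def]
      apply Continuous.add
      · apply Continuous.mul
        · exact continuous_const.sub (hclamp_cont.comp continuous_fst)
        · exact (hfun_cont.comp continuous_snd).inv₀ (fun p => ne_of_gt (hfun_pos p.2))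
      · exact (hclamp_cont.comp continuous_fst).mul continuous_const
    · intro p
      exact hcoef_mem p.1 p.2
  have hH1ne : ∀ s ∈ Icc (0:ℝ) 1, ∀ t ∈ Icc (0:ℝ) 1, H1 s t ≠ 0 := by
    intro s _ t _
    rw [hH1_def]
    exact hne_gen _ t (ne_of_gt (hcoef_pos s t)) (hcoef_mem s t)
  have hH1loop : ∀ s ∈ Icc (0:ℝ) 1, H1 s 1 = H1 s 0 := by
    intro s _
    rw [hH1_def]
    have hcoefloop : coef s 1 = coef s 0 := by
      rw [hcoef_def]
      simp only [hfun_loop]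
    simp only [hcoefloop, hpt_loop]
  have hstep2 : wind (H1 1) = wind (H1 0) := wind_homotopy hH1cont hH1ne hH1loop
  have hH1_1 : H1 1 = γin := by
    funext t
    rw [hH1_def, hγin_def]
    have : coef 1 t = ε := by
      rw [hcoef_def]
      simp only [hclamp1]
      ring
    simp only [this]
  have hH1_0 : H1 0 = γout := by
    funext t
    rw [hH1_def, hγout_def]
    have : coef 0 t = (hfun t)⁻¹ := by
      rw [hcoef_def]
      simp only [hclamp0]
      ring
    simp only [this]
  rw [hH1_1, hH1_0] at hstep2
  -- Step 3 : wind φ = wind γin via H2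
  have hpt_zero : ∀ t, pt 0 t = z₀ := by
    intro t
    rw [hpt_def]
    simp
  have hH2cont : Continuous fun p : ℝ × ℝ => H2 p.1 p.2 := by
    rw [hH2_def]
    apply Continuous.sub
    · exact hF2 (fun _ => ε) continuous_const (fun p => hεmem p.2)
    · apply hF2 (fun p => -(clamp p.1 * ε))
      · exact ((hclamp_cont.comp continuous_fst).mul continuous_const).neg
      · intro p
        apply hpt_mem
        rw [abs_neg, abs_of_nonneg (mul_nonneg (hclamp_mem p.1).1 hεpos.le)]
        calc clamp p.1 * ε ≤ 1 * ε := by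
              exact mul_le_mul_of_nonneg_right (hclamp_mem p.1).2 hεpos.le
          _ = ε := one_mul ε
  have hH2mem : ∀ s t : ℝ, pt (-(clamp s * ε)) t ∈ unitSquare := by
    intro s t
    apply hpt_mem
    rw [abs_neg, abs_of_nonneg (mul_nonneg (hclamp_mem s).1 hεpos.le)]
    calc clamp s * ε ≤ 1 * ε := mul_le_mul_of_nonneg_right (hclamp_mem s).2 hεpos.le
      _ = ε := one_mul ε
  have hH2ne : ∀ s ∈ Icc (0:ℝ) 1, ∀ t ∈ Icc (0:ℝ) 1, H2 s t ≠ 0 := by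
    intro s _ t _
    rw [hH2_def]
    apply hne_two _ _ t ?_ (hεmem t) (hH2mem s t)
    intro h
    have : ε * (1 + clamp s) = 0 := by linarith
    rcases mul_eq_zero.1 this with h' | h'
    · exact absurd h' (ne_of_gt hεpos)
    · linarith [(hclamp_mem s).1]
  have hH2loop : ∀ s ∈ Icc (0:ℝ) 1, H2 s 1 = H2 s 0 := by
    intro s _
    rw [hH2_def]
    simp only [hpt_loop]
  have hstep3 : wind (H2 1) = wind (H2 0) := wind_homotopy hH2cont hH2ne hH2loop
  have hH2_1 : H2 1 = φ := by
    funext t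
    rw [hH2_def, hφ_def]
    simp only [hclamp1, one_mul]
  have hH2_0 : H2 0 = γin := by
    funext t
    rw [hH2_def, hγin_def]
    simp only [hclamp0, zero_mul, neg_zero, hpt_zero, hW_def]
  rw [hH2_1, hH2_0] at hstep3
  -- Step 4 : antipodal property of φ, so wind φ ≠ 0
  have hpt_anti : ∀ c t : ℝ, pt c (t + 1/2) = pt (-c) t := by
    intro c t
    have h1 : (v (t + 1/2)).1 = -(v t).1 := by rw [hv_anti]
    have h2 : (v (t + 1/2)).2 = -(v t).2 := by rw [hv_anti]
    apply Prod.ext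
    · show z₀.1 + c * (v (t + 1/2)).1 = z₀.1 + (-c) * (v t).1
      rw [h1]; ring
    · show z₀.2 + c * (v (t + 1/2)).2 = z₀.2 + (-c) * (v t).2
      rw [h2]; ring
  have hφ_anti : ∀ t ∈ Icc (0:ℝ) (1/2), φ (t + 1/2) = -φ t := by
    intro t _
    have e1 : pt ε (t + 1/2) = pt (-ε) t := hpt_anti ε t
    have e2 : pt (-ε) (t + 1/2) = pt ε t := by rw [hpt_anti, neg_neg]
    show toC (f (pt ε (t + 1/2))) - toC (f (pt (-ε) (t + 1/2)))
        = -(toC (f (pt ε t)) - toC (f (pt (-ε) t)))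
    rw [e1, e2, neg_sub]
  have hφ_ne : ∀ t ∈ Icc (0:ℝ) 1, φ t ≠ 0 := by
    intro t _
    rw [hφ_def]
    apply hne_two _ _ t ?_ (hεmem t) ?_
    · intro h; linarith
    · apply hpt_mem
      rw [abs_neg, abs_of_pos hεpos]
  have hstep4 : wind φ ≠ 0 := wind_antipodal_ne_zero hφ_cont.continuousOn hφ_ne hφ_anti
  -- contradiction
  apply hstep4
  rw [hstep3, hstep2, hstep1]



/-- Lemma bd (coordinate form): if a continuous injection on the unit square maps the
boundary of the square into the complement of the half-strips `T`, then it maps the whole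
square into the complement of `T`. -/
theorem image_square_disjoint_halfStrips
    (f : ℝ × ℝ → ℝ × ℝ)
    (hf : ContinuousOn f unitSquare) (hinj : Set.InjOn f unitSquare)
    (hbd : f '' frontier unitSquare ∩ halfStrips = ∅) :
    f '' unitSquare ∩ halfStrips = ∅ := by
  rw [Set.eq_empty_iff_forall_notMem]
  rintro y ⟨⟨z, hz, rfl⟩, hyT⟩
  obtain ⟨hy1, hy2⟩ := hyT
  have hy2' : (f z).2 ≤ -1 ∨ 1 ≤ (f z).2 := by
    rcases le_or_gt (f z).2 (-1) with h | h
    · exact Or.inl h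
    · right
      by_contra h'
      push_neg at h'
      exact hy2 ⟨h, h'⟩
  rcases hy2' with h | h
  · -- lower strip: reflect in the second coordinate
    set N : ℝ × ℝ → ℝ × ℝ := fun p => (p.1, -p.2) with hN_def
    have hNcont : Continuous N := by rw [hN_def]; fun_prop
    have hNinj : Function.Injective N := by
      intro a b hab
      rw [hN_def] at hab
      simp only [Prod.mk.injEq] at hab
      exact Prod.ext hab.1 (by linarith [hab.2])
    have hNT : ∀ p : ℝ × ℝ, N p ∈ halfStrips ↔ p ∈ halfStrips := by
      intro p
      constructor
      · rintro ⟨h1, h2⟩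
        refine ⟨h1, ?_⟩
        intro hIoo
        exact h2 ⟨by simpa [hN_def] using neg_lt_neg hIoo.2, by simpa [hN_def] using neg_lt_neg hIoo.1⟩
      · rintro ⟨h1, h2⟩
        refine ⟨h1, ?_⟩
        intro hIoo
        apply h2
        constructor
        · have := hIoo.2
          show -1 < p.2
          simp only [hN_def] at this
          linarith
        · have := hIoo.1
          show p.2 < 1
          simp only [hN_def] at this
          linarith
    apply key_upper (N ∘ f) (hNcont.comp_continuousOn hf)
      (fun a ha b hb hab => hinj ha hb (hNinj hab)) ?_ z hz
    · exact hy1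
    · show 1 ≤ -(f z).2
      linarith
    · rw [Set.eq_empty_iff_forall_notMem]
      rintro w ⟨⟨x, hx, rfl⟩, hwT⟩
      have : f x ∈ halfStrips := (hNT (f x)).1 hwT
      have hmem : f x ∈ f '' frontier unitSquare ∩ halfStrips :=
        ⟨mem_image_of_mem f hx, this⟩
      rw [hbd] at hmem
      exact hmem
  · exact key_upper f hf hinj hbd z hz hy1 h
end
end

section
/- Let c₁, u₁, s₁, c₂, u₂, s₂ ∈ ℝ² with u₁, s₁ linearly independent and u₂, s₂ linearly independent. Let |N₁| = {c₁ + p·u₁ + q·s₁ : p, q ∈ [-1,1]} and N₂⁺ = {c₂ + p·u₂ + q·s₂ : p ∈ [-1,1], q ∈ ℝ ∖ (-1,1)}. Let f : ℝ² → ℝ² be continuous on |N₁| and injective on |N₁|. If f(frontier |N₁|) ∩ N₂⁺ = ∅, then f(|N₁|) ∩ N₂⁺ = ∅. -/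
open Complex Set Real


/-- The support `|N| = c_N([-1,1] × [-1,1])` of the h-set `t(c,u,s)`. -/
def hsetSupport (c u s : Fin 2 → ℝ) : Set (Fin 2 → ℝ) :=
  {x | ∃ p ∈ Set.Icc (-1 : ℝ) 1, ∃ q ∈ Set.Icc (-1 : ℝ) 1, x = c + p • u + q • s}

/-- The set `N⁺ = c_N([-1,1] × (ℝ ∖ (-1,1)))` of the h-set `t(c,u,s)`. -/
def hsetPlus (c u s : Fin 2 → ℝ) : Set (Fin 2 → ℝ) :=
  {x | ∃ p ∈ Set.Icc (-1 : ℝ) 1, ∃ q ∈ (Set.Ioo (-1 : ℝ) 1)ᶜ, x = c + p • u + q • s}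


noncomputable section
namespace HsetProof


lemma exists_int_of_exp_eq {a b : ℝ}
    (h : Complex.exp (a * Complex.I) = Complex.exp (b * Complex.I)) :
    ∃ k : ℤ, a - b = 2 * π * k := by
  rw [Complex.exp_eq_exp_iff_exists_int] at h
  obtain ⟨n, hn⟩ := h
  refine ⟨n, ?_⟩
  have h2 : ((a : ℂ) - b - 2 * π * n) * Complex.I = 0 := by
    push_cast; linear_combination hn
  rcases mul_eq_zero.1 h2 with h3 | h3
  · have : ((a - b : ℝ) : ℂ) = ((2 * π * n : ℝ) : ℂ) := by push_cast; linear_combination h3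
    exact_mod_cast this
  · exact absurd h3 Complex.I_ne_zero

lemma constant_of_int_valued {s : Set ℝ} (hs : IsPreconnected s) {f : ℝ → ℝ}
    (hf : ContinuousOn f s) (hint : ∀ x ∈ s, ∃ k : ℤ, f x = 2 * π * k)
    {x y : ℝ} (hx : x ∈ s) (hy : y ∈ s) : f x = f y := by
  have him : IsPreconnected (f '' s) := hs.image f hf
  have hoc : OrdConnected (f '' s) := him.ordConnected
  rcases lt_trichotomy (f x) (f y) with hlt | he | hlt
  · exfalso
    obtain ⟨kx, hkx⟩ := hint x hx
    obtain ⟨ky, hky⟩ := hint y hy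
    have hklt : kx < ky := by
      by_contra hk
      push_neg at hk
      have : (ky : ℝ) ≤ kx := by exact_mod_cast hk
      nlinarith [Real.pi_pos]
    have hmem : (2 * π * kx + π) ∈ Icc (f x) (f y) := by
      constructor
      · rw [hkx]; nlinarith [Real.pi_pos]
      · rw [hky]
        have : (kx : ℝ) + 1 ≤ ky := by exact_mod_cast hklt
        nlinarith [Real.pi_pos]
    have := hoc.out ⟨x, hx, hkx ▸ rfl⟩ ⟨y, hy, hky ▸ rfl⟩ hmem
    obtain ⟨z, hz, hfz⟩ := this
    obtain ⟨kz, hkz⟩ := hint z hz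
    have : π * (2 * kz) = π * (2 * kx + 1) := by rw [hkz] at hfz; linarith [hfz]
    have h2 : (2 * kz : ℝ) = 2 * kx + 1 := by
      have := mul_left_cancel₀ (ne_of_gt Real.pi_pos) this
      linarith
    have : (2 * kz : ℤ) = 2 * kx + 1 := by exact_mod_cast h2
    omega
  · exact he
  · exfalso
    obtain ⟨kx, hkx⟩ := hint x hx
    obtain ⟨ky, hky⟩ := hint y hy
    have hklt : ky < kx := by
      by_contra hk
      push_neg at hk
      have : (kx : ℝ) ≤ ky := by exact_mod_cast hk
      nlinarith [Real.pi_pos]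
    have hmem : (2 * π * ky + π) ∈ Icc (f y) (f x) := by
      constructor
      · rw [hky]; nlinarith [Real.pi_pos]
      · rw [hkx]
        have : (ky : ℝ) + 1 ≤ kx := by exact_mod_cast hklt
        nlinarith [Real.pi_pos]
    have := hoc.out ⟨y, hy, hky ▸ rfl⟩ ⟨x, hx, hkx ▸ rfl⟩ hmem
    obtain ⟨z, hz, hfz⟩ := this
    obtain ⟨kz, hkz⟩ := hint z hz
    have : π * (2 * kz) = π * (2 * ky + 1) := by rw [hkz] at hfz; linarith [hfz]
    have h2 : (2 * kz : ℝ) = 2 * ky + 1 := by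
      have := mul_left_cancel₀ (ne_of_gt Real.pi_pos) this
      linarith
    have : (2 * kz : ℤ) = 2 * ky + 1 := by exact_mod_cast h2
    omega

lemma exp_im_log {q : ℂ} (hq : q ≠ 0) :
    Complex.exp ((Complex.log q).im * Complex.I) = q / (‖q‖ : ℂ) := by
  have habs : (0:ℝ) < ‖q‖ := by
    simpa [norm_pos_iff] using hq
  have hre : Complex.exp (((Complex.log q).re : ℂ)) = (‖q‖ : ℂ) := by
    rw [Complex.log_re, ← Complex.ofReal_exp, Real.exp_log habs]
  have hsplit : ((Complex.log q).im : ℂ) * Complex.I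
      = Complex.log q - ((Complex.log q).re : ℂ) := by
    rw [← Complex.re_add_im (Complex.log q)]; ring_nf; simp [Complex.ext_iff]
  rw [hsplit, Complex.exp_sub, Complex.exp_log hq, hre]



/-- Continuous argument lifting on a convex compact set. -/
lemma exists_lift {E : Type*} [NormedAddCommGroup E] [NormedSpace ℝ E]
    {D : Set E} (hconv : Convex ℝ D) (hcomp : IsCompact D)
    {H : E → ℂ} (hH : ContinuousOn H D) (h0 : ∀ x ∈ D, H x ≠ 0) :
    ∃ θ : E → ℝ, ContinuousOn θ D ∧
      ∀ x ∈ D, H x = (‖H x‖ : ℂ) * Complex.exp ((θ x : ℂ) * Complex.I) := by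
  rcases D.eq_empty_or_nonempty with rfl | ⟨c, hc⟩
  · exact ⟨fun _ => 0, continuousOn_empty _, fun x hx => absurd hx (notMem_empty x)⟩
  -- minimum of |H|
  have habscont : ContinuousOn (fun x => ‖H x‖) D := continuous_norm.comp_continuousOn hH
  obtain ⟨x₀, hx₀D, hx₀min⟩ := hcomp.exists_isMinOn ⟨c, hc⟩ habscont
  set m : ℝ := ‖H x₀‖ with hm
  have hmpos : 0 < m := by
    have := h0 x₀ hx₀D
    simpa [hm, norm_pos_iff] using this
  have hmle : ∀ x ∈ D, m ≤ ‖H x‖ := fun x hx => hx₀min hx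
  -- uniform continuity
  have hUC : UniformContinuousOn H D := hcomp.uniformContinuousOn_of_continuous hH
  rw [Metric.uniformContinuousOn_iff] at hUC
  obtain ⟨δ, hδpos, hδ⟩ := hUC m hmpos
  -- bound on diameter
  obtain ⟨Cb, hCb⟩ := Metric.isBounded_iff.1 hcomp.isBounded
  obtain ⟨n, hn⟩ := exists_nat_gt (max 0 (Cb / δ))
  have hnpos : 0 < (n : ℝ) := lt_of_le_of_lt (le_max_left 0 _) hn
  have hn0 : (n : ℝ) ≠ 0 := ne_of_gt hnpos
  -- the subdivision points
  set P : ℕ → E → E := fun k x => c + ((k : ℝ) / n) • (x - c) with hP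
  have hPmem : ∀ k : ℕ, k ≤ n → ∀ x ∈ D, P k x ∈ D := by
    intro k hk x hx
    exact hconv.add_smul_sub_mem hc hx ⟨by positivity, by
      rw [div_le_one hnpos]; exact_mod_cast hk⟩
  have hPcont : ∀ k : ℕ, Continuous (P k) := by
    intro k; exact continuous_const.add ((continuous_id.sub continuous_const).const_smul _)
  -- consecutive points are δ-close
  have hPclose : ∀ k : ℕ, ∀ x ∈ D, dist (P (k+1) x) (P k x) < δ := by
    intro k x hx
    have hstep : P (k+1) x - P k x = ((1 : ℝ) / n) • (x - c) := by
      simp only [hP]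
      push_cast
      module
    rw [dist_eq_norm, hstep, norm_smul]
    have hxc : ‖x - c‖ ≤ Cb := by rw [← dist_eq_norm]; exact hCb hx hc
    have h1n : |(1:ℝ)/n| = 1/n := abs_of_pos (by positivity)
    rw [Real.norm_eq_abs, h1n]
    have hCbδ : Cb / δ < n := lt_of_le_of_lt (le_max_right 0 _) hn
    have hCbpos : Cb < n * δ := by
      rw [div_lt_iff₀ hδpos] at hCbδ; linarith
    calc 1/n * ‖x - c‖ ≤ 1/n * Cb := by
          apply mul_le_mul_of_nonneg_left hxc (by positivity)
      _ < δ := by rw [div_mul_eq_mul_div, mul_comm]; rw [div_lt_iff₀ hnpos]; linarith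
  set G : ℕ → E → ℂ := fun k x => H (P k x) with hG
  have hGne : ∀ k ≤ n, ∀ x ∈ D, G k x ≠ 0 := fun k hk x hx => h0 _ (hPmem k hk x hx)
  have hGm : ∀ k ≤ n, ∀ x ∈ D, m ≤ ‖G k x‖ := fun k hk x hx => hmle _ (hPmem k hk x hx)
  have hGclose : ∀ k : ℕ, k + 1 ≤ n → ∀ x ∈ D, ‖G (k+1) x - G k x‖ < m := by
    intro k hk x hx
    have := hδ (P (k+1) x) (hPmem _ hk x hx) (P k x) (hPmem k (le_of_lt hk) x hx) (hPclose k x hx)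
    simpa [Complex.dist_eq] using this
  -- ratios lie in the slit plane
  set r : ℕ → E → ℂ := fun k x => G (k+1) x / G k x with hr
  have hrslit : ∀ k : ℕ, k + 1 ≤ n → ∀ x ∈ D, r k x ∈ Complex.slitPlane := by
    intro k hk x hx
    have hk' : k ≤ n := le_of_lt hk
    have hne : G k x ≠ 0 := hGne k hk' x hx
    have h1 : ‖r k x - 1‖ < 1 := by
      have : r k x - 1 = (G (k+1) x - G k x) / G k x := by
        show G (k+1) x / G k x - 1 = _
        rw [sub_div, div_self hne]
      rw [this, norm_div]
      rw [div_lt_one (by simpa [norm_pos_iff] using hne)]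
      exact lt_of_lt_of_le (hGclose k hk x hx) (hGm k hk' x hx)
    -- |r - 1| < 1 implies 0 < re r
    left
    have := Complex.abs_re_le_norm (r k x - 1)
    have h2 : |(r k x).re - 1| < 1 := by
      have : (r k x - 1).re = (r k x).re - 1 := by simp
      rw [this] at *
      exact lt_of_le_of_lt (by simpa using Complex.abs_re_le_norm (r k x - 1)) h1
    cases' abs_lt.1 h2 with h3 _
    linarith
  have hrne : ∀ k : ℕ, k + 1 ≤ n → ∀ x ∈ D, r k x ≠ 0 := by
    intro k hk x hx
    exact div_ne_zero (hGne (k+1) hk x hx) (hGne k (le_of_lt hk) x hx)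
  -- the lift
  set θ : E → ℝ := fun x => (H c).arg + ∑ k ∈ Finset.range n, (Complex.log (r k x)).im with hθ
  refine ⟨θ, ?_, ?_⟩
  · -- continuity
    apply (continuousOn_const.add ?_)
    apply continuousOn_finset_sum
    intro k hk
    have hk' : k + 1 ≤ n := Finset.mem_range.1 hk
    apply Complex.continuous_im.comp_continuousOn
    apply ContinuousOn.clog
    · apply ContinuousOn.div
      · exact hH.comp (hPcont (k+1)).continuousOn (fun x hx => hPmem (k+1) hk' x hx)
      · exact hH.comp (hPcont k).continuousOn (fun x hx => hPmem k (le_of_lt hk') x hx)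
      · exact fun x hx => hGne k (le_of_lt hk') x hx
    · exact fun x hx => hrslit k hk' x hx
  · intro x hx
    -- inductive claim
    have key : ∀ j : ℕ, j ≤ n →
        G j x = (‖G j x‖ : ℂ) *
          Complex.exp ((((H c).arg + ∑ k ∈ Finset.range j, (Complex.log (r k x)).im : ℝ) : ℂ) * Complex.I) := by
      intro j
      induction j with
      | zero =>
        intro _
        have hP0 : P 0 x = c := by simp [hP]
        simp only [hG, hP0, Finset.range_zero, Finset.sum_empty, add_zero]
        exact (Complex.norm_mul_exp_arg_mul_I (H c)).symm
      | succ j ih =>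
        intro hj
        have hj' : j ≤ n := le_of_lt hj
        have hGj := hGne j hj' x hx
        have hGj1 := hGne (j+1) hj x hx
        have habsj : (‖G j x‖ : ℂ) ≠ 0 := by
          exact_mod_cast (norm_ne_zero_iff.2 hGj)
        have habsj1 : (‖G (j+1) x‖ : ℂ) ≠ 0 := by
          exact_mod_cast (norm_ne_zero_iff.2 hGj1)
        have hsum : ((((H c).arg + ∑ k ∈ Finset.range (j+1), (Complex.log (r k x)).im : ℝ)) : ℂ) * Complex.I
            = ((((H c).arg + ∑ k ∈ Finset.range j, (Complex.log (r k x)).im : ℝ)) : ℂ) * Complex.I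
              + ((Complex.log (r j x)).im : ℂ) * Complex.I := by
          rw [Finset.sum_range_succ]; push_cast; ring
        rw [hsum, Complex.exp_add, exp_im_log (hrne j hj x hx)]
        have hEold : Complex.exp ((((H c).arg + ∑ k ∈ Finset.range j, (Complex.log (r k x)).im : ℝ) : ℂ) * Complex.I)
            = G j x / (‖G j x‖ : ℂ) := by
          rw [eq_div_iff habsj]
          linear_combination -(ih hj')
        rw [hEold]
        have habsr : (‖r j x‖ : ℂ) = (‖G (j+1) x‖ : ℂ) / (‖G j x‖ : ℂ) := by
          simp only [hr, norm_div]; push_cast; ring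
        simp only [hr] at habsr ⊢
        rw [habsr]
        have hGj' : G j x ≠ 0 := hGj
        field_simp
    have hPn : P n x = x := by
      simp only [hP, div_self hn0, one_smul]
      abel
    have hfin := key n le_rfl
    simp only [hG, hPn, hθ] at hfin ⊢
    exact hfin



-- from s1/s2 (assumed available): exists_int_of_exp_eq, constant_of_int_valued, exists_lift

/-- θ is a continuous argument of γ on s. -/
def IsLiftOn (γ : ℝ → ℂ) (θ : ℝ → ℝ) (s : Set ℝ) : Prop :=
  ContinuousOn θ s ∧ ∀ t ∈ s, γ t = (‖γ t‖ : ℂ) * Complex.exp ((θ t : ℂ) * Complex.I)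

lemma exp_eq_of_liftvals {z w : ℂ} {a b : ℝ} (hzw : z = w) (hz : z ≠ 0)
    (h1 : z = (‖z‖ : ℂ) * Complex.exp ((a : ℂ) * Complex.I))
    (h2 : w = (‖w‖ : ℂ) * Complex.exp ((b : ℂ) * Complex.I)) :
    ∃ k : ℤ, a - b = 2 * π * k := by
  subst hzw
  have habs : (‖z‖ : ℂ) ≠ 0 := by
    exact_mod_cast norm_ne_zero_iff.2 hz
  have : Complex.exp ((a : ℂ) * Complex.I) = Complex.exp ((b : ℂ) * Complex.I) :=
    mul_left_cancel₀ habs (h1.symm.trans h2)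
  exact exists_int_of_exp_eq this

lemma lift_diff_unique {γ : ℝ → ℂ} {θ θ' : ℝ → ℝ}
    (h0 : ∀ t ∈ Icc (0:ℝ) 1, γ t ≠ 0)
    (hθ : IsLiftOn γ θ (Icc 0 1)) (hθ' : IsLiftOn γ θ' (Icc 0 1)) :
    θ 1 - θ 0 = θ' 1 - θ' 0 := by
  have key := constant_of_int_valued (isPreconnected_Icc (a := (0:ℝ)) (b := 1))
    (f := fun t => θ t - θ' t) (hθ.1.sub hθ'.1)
    (fun t ht => exp_eq_of_liftvals rfl (h0 t ht) (hθ.2 t ht) (hθ'.2 t ht))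
    (right_mem_Icc.2 one_pos.le) (left_mem_Icc.2 one_pos.le)
  linarith

lemma homotopy_invariance {H : ℝ × ℝ → ℂ}
    (hH : ContinuousOn H (Icc (0:ℝ) 1 ×ˢ Icc (0:ℝ) 1))
    (h0 : ∀ w ∈ Icc (0:ℝ) 1 ×ˢ Icc (0:ℝ) 1, H w ≠ 0)
    (hloop : ∀ s ∈ Icc (0:ℝ) 1, H (s, 1) = H (s, 0))
    {θ₀ θ₁ : ℝ → ℝ}
    (hθ₀ : IsLiftOn (fun t => H (0, t)) θ₀ (Icc 0 1))
    (hθ₁ : IsLiftOn (fun t => H (1, t)) θ₁ (Icc 0 1)) :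
    θ₀ 1 - θ₀ 0 = θ₁ 1 - θ₁ 0 := by
  have hQconv : Convex ℝ (Icc (0:ℝ) 1 ×ˢ Icc (0:ℝ) 1) := (convex_Icc _ _).prod (convex_Icc _ _)
  have hQcomp : IsCompact (Icc (0:ℝ) 1 ×ˢ Icc (0:ℝ) 1) := isCompact_Icc.prod isCompact_Icc
  obtain ⟨Θ, hΘc, hΘ⟩ := exists_lift hQconv hQcomp hH h0
  have h01 : (0:ℝ) ∈ Icc (0:ℝ) 1 := left_mem_Icc.2 one_pos.le
  have h11 : (1:ℝ) ∈ Icc (0:ℝ) 1 := right_mem_Icc.2 one_pos.le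
  have hmk : ∀ s ∈ Icc (0:ℝ) 1, ∀ t ∈ Icc (0:ℝ) 1, (s, t) ∈ Icc (0:ℝ) 1 ×ˢ Icc (0:ℝ) 1 :=
    fun s hs t ht => ⟨hs, ht⟩
  have hlift : ∀ s ∈ Icc (0:ℝ) 1, IsLiftOn (fun t => H (s, t)) (fun t => Θ (s, t)) (Icc 0 1) := by
    intro s hs
    constructor
    · exact hΘc.comp (Continuous.continuousOn (Continuous.prodMk_right s)) (fun t ht => hmk s hs t ht)
    · exact fun t ht => hΘ (s, t) (hmk s hs t ht)
  -- d is 2πℤ-valued continuous, hence constant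
  have hdc : ContinuousOn (fun s => Θ (s, 1) - Θ (s, 0)) (Icc (0:ℝ) 1) := by
    apply ContinuousOn.sub
    · exact hΘc.comp (Continuous.continuousOn (continuous_id.prodMk continuous_const)) (fun s hs => hmk s hs 1 h11)
    · exact hΘc.comp (Continuous.continuousOn (continuous_id.prodMk continuous_const)) (fun s hs => hmk s hs 0 h01)
  have hdint : ∀ s ∈ Icc (0:ℝ) 1, ∃ k : ℤ, Θ (s, 1) - Θ (s, 0) = 2 * π * k := by
    intro s hs
    exact exp_eq_of_liftvals (hloop s hs) (h0 _ (hmk s hs 1 h11))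
      (hΘ (s, 1) (hmk s hs 1 h11)) (hΘ (s, 0) (hmk s hs 0 h01))
  have hdconst : Θ ((0:ℝ), (1:ℝ)) - Θ ((0:ℝ), (0:ℝ)) = Θ ((1:ℝ), (1:ℝ)) - Θ ((1:ℝ), (0:ℝ)) :=
    constant_of_int_valued (isPreconnected_Icc (a := (0:ℝ)) (b := 1)) hdc hdint h01 h11
  have e0 : θ₀ 1 - θ₀ 0 = Θ ((0:ℝ), (1:ℝ)) - Θ ((0:ℝ), (0:ℝ)) :=
    lift_diff_unique (fun t ht => h0 _ (hmk 0 h01 t ht)) hθ₀ (hlift 0 h01)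
  have e1 : θ₁ 1 - θ₁ 0 = Θ ((1:ℝ), (1:ℝ)) - Θ ((1:ℝ), (0:ℝ)) :=
    lift_diff_unique (fun t ht => h0 _ (hmk 1 h11 t ht)) hθ₁ (hlift 1 h11)
  linarith

lemma odd_loop_ne_zero {γ : ℝ → ℂ} {θ : ℝ → ℝ}
    (h0 : ∀ t ∈ Icc (0:ℝ) 1, γ t ≠ 0)
    (hodd : ∀ t ∈ Icc (0:ℝ) (1/2), γ (t + 1/2) = -γ t)
    (hθ : IsLiftOn γ θ (Icc 0 1)) : θ 1 - θ 0 ≠ 0 := by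
  have hhalf : ∀ t ∈ Icc (0:ℝ) (1/2), t ∈ Icc (0:ℝ) 1 := by
    intro t ht; exact ⟨ht.1, by linarith [ht.2]⟩
  have hhalf' : ∀ t ∈ Icc (0:ℝ) (1/2), t + 1/2 ∈ Icc (0:ℝ) 1 := by
    intro t ht; exact ⟨by linarith [ht.1], by linarith [ht.2]⟩
  have hdint : ∀ t ∈ Icc (0:ℝ) (1/2), ∃ k : ℤ, (θ (t + 1/2) - θ t - π) = 2 * π * k := by
    intro t ht
    have h1 := hθ.2 _ (hhalf' t ht)
    have h2 := hθ.2 _ (hhalf t ht)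
    have hne : γ (t + 1/2) ≠ 0 := h0 _ (hhalf' t ht)
    -- γ(t+1/2) = |γ(t+1/2)| exp((θ t + π) I) using γ(t+1/2) = -γ t
    have h2' : γ (t + 1/2) = (‖γ (t + 1/2)‖ : ℂ) *
        Complex.exp (((θ t + π : ℝ) : ℂ) * Complex.I) := by
      have habs2 : ‖γ (t + 1/2)‖ = ‖γ t‖ := by
        rw [hodd t ht]; simp
      rw [habs2, hodd t ht]
      push_cast
      rw [add_mul, Complex.exp_add, Complex.exp_pi_mul_I]
      linear_combination -h2
    obtain ⟨k, hk⟩ := exp_eq_of_liftvals rfl hne h1 h2'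
    exact ⟨k, by linarith⟩
  have hdc : ContinuousOn (fun t => θ (t + 1/2) - θ t - π) (Icc (0:ℝ) (1/2)) := by
    apply ContinuousOn.sub _ continuousOn_const
    apply ContinuousOn.sub
    · exact hθ.1.comp (Continuous.continuousOn (continuous_id.add continuous_const)) hhalf'
    · exact hθ.1.mono (fun t ht => hhalf t ht)
  have h0m : (0:ℝ) ∈ Icc (0:ℝ) (1/2) := left_mem_Icc.2 (by norm_num)
  have hhm : (1/2:ℝ) ∈ Icc (0:ℝ) (1/2) := right_mem_Icc.2 (by norm_num)
  have hconst : θ ((0:ℝ) + 1/2) - θ 0 - π = θ ((1/2:ℝ) + 1/2) - θ (1/2) - π :=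
    constant_of_int_valued (isPreconnected_Icc (a := (0:ℝ)) (b := 1/2)) hdc hdint h0m hhm
  obtain ⟨k, hk⟩ := hdint 0 h0m
  have h05 : (0:ℝ) + 1/2 = 1/2 := by norm_num
  have h11' : (1/2:ℝ) + 1/2 = 1 := by norm_num
  rw [h05] at hconst hk
  rw [h11'] at hconst
  intro hzero
  have hfac : (2 * π) * (2 * (k:ℝ) + 1) = 0 := by linear_combination hconst - 2 * hk + hzero
  have h2k : (2 * (k:ℝ) + 1) = 0 := by
    have hpi : (2 * π) ≠ 0 := by positivity
    exact (mul_eq_zero.1 hfac).resolve_left hpi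
  have : (2 * k + 1 : ℤ) = 0 := by exact_mod_cast h2k
  omega


def Dsq : Set (ℝ × ℝ) := Icc (-1:ℝ) 1 ×ˢ Icc (-1:ℝ) 1

def Bset : Set ℂ := {z | z.re ∈ Icc (-1:ℝ) 1 ∧ z.im ∈ (Ioo (-1:ℝ) 1)ᶜ}

def clamp (x : ℝ × ℝ) : ℝ × ℝ := (max (-1) (min 1 x.1), max (-1) (min 1 x.2))

def circ (t : ℝ) : ℝ × ℝ := (Real.cos (2*π*t), Real.sin (2*π*t))

lemma Dsq_closed : IsClosed Dsq := (isClosed_Icc).prod isClosed_Icc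

lemma Dsq_interior : interior Dsq = Ioo (-1:ℝ) 1 ×ˢ Ioo (-1:ℝ) 1 := by
  rw [Dsq, interior_prod_eq, interior_Icc]

lemma circ_cont : Continuous circ :=
  (Real.continuous_cos.comp (continuous_const.mul continuous_id)).prodMk
    (Real.continuous_sin.comp (continuous_const.mul continuous_id))

lemma circ_ne_zero (t : ℝ) : circ t ≠ 0 := by
  intro h
  have h1 : Real.cos (2*π*t) = 0 := congrArg Prod.fst h
  have h2 : Real.sin (2*π*t) = 0 := congrArg Prod.snd h
  have h3 := Real.sin_sq_add_cos_sq (2*π*t)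
  rw [h1, h2] at h3; norm_num at h3

lemma circ_half (t : ℝ) : circ (t + 1/2) = - circ t := by
  unfold circ
  have h : 2*π*(t + 1/2) = 2*π*t + π := by ring
  rw [h, Real.cos_add_pi, Real.sin_add_pi]
  rfl

lemma circ_one : circ 1 = circ 0 := by
  unfold circ
  norm_num [Real.cos_two_pi, Real.sin_two_pi]

lemma clamp_cont : Continuous clamp :=
  ((continuous_const.max (continuous_const.min continuous_fst))).prodMk
    ((continuous_const.max (continuous_const.min continuous_snd)))

lemma clamp_mem (x : ℝ × ℝ) : clamp x ∈ Dsq :=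
  ⟨⟨le_max_left _ _, max_le (by norm_num) (min_le_left _ _)⟩,
   ⟨le_max_left _ _, max_le (by norm_num) (min_le_left _ _)⟩⟩

lemma clamp_id {x : ℝ × ℝ} (hx : x ∈ Dsq) : clamp x = x := by
  obtain ⟨⟨h1, h2⟩, ⟨h3, h4⟩⟩ := hx
  unfold clamp
  rw [min_eq_right h2, max_eq_right h1, min_eq_right h4, max_eq_right h3]

lemma clamp_frontier {x : ℝ × ℝ} (hx : x ∉ Dsq) : clamp x ∈ frontier Dsq := by
  rw [Dsq_closed.frontier_eq]
  refine ⟨clamp_mem x, ?_⟩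
  rw [Dsq_interior]
  rintro ⟨⟨h1, h2⟩, ⟨h3, h4⟩⟩
  apply hx
  have hx1 : -1 < min 1 x.1 := by
    rcases lt_max_iff.1 h1 with h | h
    · norm_num at h
    · exact h
  have hx2 : min 1 x.1 < 1 := (max_lt_iff.1 h2).2
  have hx3 : -1 < min 1 x.2 := by
    rcases lt_max_iff.1 h3 with h | h
    · norm_num at h
    · exact h
  have hx4 : min 1 x.2 < 1 := (max_lt_iff.1 h4).2
  have hc1 : x.1 < 1 := by
    rcases min_lt_iff.1 hx2 with h | h
    · norm_num at h
    · exact h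
  have hc2 : x.2 < 1 := by
    rcases min_lt_iff.1 hx4 with h | h
    · norm_num at h
    · exact h
  have hd1 : -1 < x.1 := lt_of_lt_of_le hx1 (min_le_right _ _)
  have hd2 : -1 < x.2 := lt_of_lt_of_le hx3 (min_le_right _ _)
  exact ⟨⟨hd1.le, hc1.le⟩, ⟨hd2.le, hc2.le⟩⟩

lemma clamp_coord {v w : ℝ} (hv1 : -1 < v) (hv2 : v < 1)
    (h : max (-1) (min 1 (v + w)) = v) : w = 0 := by
  rcases le_or_gt (v + w) 1 with h1 | h1
  · rcases le_or_gt (-1) (v + w) with h2 | h2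
    · rw [min_eq_right h1, max_eq_right h2] at h
      linarith
    · rw [min_eq_right h1, max_eq_left h2.le] at h
      linarith
  · rw [min_eq_left h1.le, max_eq_right (by norm_num : (-1:ℝ) ≤ 1)] at h
    linarith

lemma clamp_ne_center {a : ℝ × ℝ} (ha : a ∈ interior Dsq) {ρ : ℝ} (hρ : 0 < ρ)
    (t : ℝ) : clamp (a + ρ • circ t) ≠ a := by
  rw [Dsq_interior] at ha
  obtain ⟨⟨ha1, ha2⟩, ⟨ha3, ha4⟩⟩ := ha
  intro h
  have h1 : max (-1) (min 1 (a.1 + ρ * Real.cos (2*π*t))) = a.1 := congrArg Prod.fst h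
  have h2 : max (-1) (min 1 (a.2 + ρ * Real.sin (2*π*t))) = a.2 := congrArg Prod.snd h
  have hc : ρ * Real.cos (2*π*t) = 0 := clamp_coord ha1 ha2 h1
  have hs : ρ * Real.sin (2*π*t) = 0 := clamp_coord ha3 ha4 h2
  have hc' : Real.cos (2*π*t) = 0 := by
    rcases mul_eq_zero.1 hc with h' | h'
    · exact absurd h' (ne_of_gt hρ)
    · exact h'
  have hs' : Real.sin (2*π*t) = 0 := by
    rcases mul_eq_zero.1 hs with h' | h'
    · exact absurd h' (ne_of_gt hρ)
    · exact h'
  have h3 := Real.sin_sq_add_cos_sq (2*π*t)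
  rw [hc', hs'] at h3; norm_num at h3


lemma aux_re_bound {x s : ℝ} (hx1 : -1 ≤ x) (hx2 : x ≤ 1) (hs0 : 0 ≤ s) (hs1 : s ≤ 1) :
    -1 ≤ x + s * (0 - x) ∧ x + s * (0 - x) ≤ 1 := by
  constructor <;> nlinarith

lemma aux_im_bound {y T σ s : ℝ} (hσsq : σ * σ = 1) (h1 : 1 ≤ σ * y) (hT : 1 ≤ T)
    (hs0 : 0 ≤ s) (hs1 : s ≤ 1) : 1 ≤ σ * (y + s * (σ * T - y)) := by
  have h2 : σ * (y + s * (σ * T - y)) = (1 - s) * (σ * y) + s * ((σ * σ) * T) := by ring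
  rw [h2, hσsq, one_mul]
  nlinarith [mul_nonneg (by linarith : (0:ℝ) ≤ 1 - s) (by linarith : (0:ℝ) ≤ σ * y - 1),
    mul_nonneg hs0 (by linarith : (0:ℝ) ≤ T - 1)]

lemma aux_abs_bound {u v M T : ℝ} (hu : |u| ≤ 1) (hv : 0 ≤ v) (hvM : v ≤ M)
    (hMT : max M 0 + 1 = T) (h : |u| * v = T) : False := by
  have h4 : M ≤ max M 0 := le_max_left M 0
  have h5 : (0:ℝ) ≤ max M 0 := le_max_right M 0
  nlinarith [abs_nonneg u]

lemma aux_r_ne {r w : ℝ} (hr : 0 < r) (hw0 : 0 ≤ w) : r ≠ -(w * r) := by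
  have : 0 ≤ w * r := mul_nonneg hw0 hr.le
  intro h; linarith

lemma aux_rho_pos {r w : ℝ} (hr : 0 < r) (hr1 : r ≤ 1) (hw0 : 0 ≤ w) :
    0 < r + w * (5 - r) := by nlinarith

lemma not_mem_Dsq (a : ℝ × ℝ) (ha : a ∈ interior Dsq) (t : ℝ) :
    a + (5:ℝ) • circ t ∉ Dsq := by
  rw [Dsq_interior] at ha
  obtain ⟨⟨ha1, ha2⟩, ⟨ha3, ha4⟩⟩ := ha
  intro hmem
  obtain ⟨h1, h2⟩ := hmem
  have e1 : (a + (5:ℝ) • circ t).1 = a.1 + 5 * Real.cos (2*π*t) := rfl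
  have e2 : (a + (5:ℝ) • circ t).2 = a.2 + 5 * Real.sin (2*π*t) := rfl
  rw [e1] at h1
  rw [e2] at h2
  obtain ⟨hb1, hb2⟩ := h1
  obtain ⟨hb3, hb4⟩ := h2
  set c := Real.cos (2*π*t)
  set s := Real.sin (2*π*t)
  have hpyth : s^2 + c^2 = 1 := Real.sin_sq_add_cos_sq (2*π*t)
  have hc1 : c < 2/5 := by linarith
  have hc2 : -(2/5) < c := by linarith
  have hs1 : s < 2/5 := by linarith
  have hs2 : -(2/5) < s := by linarith
  nlinarith [mul_pos (by linarith : (0:ℝ) < 2/5 - c) (by linarith : (0:ℝ) < c + 2/5),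
    mul_pos (by linarith : (0:ℝ) < 2/5 - s) (by linarith : (0:ℝ) < s + 2/5)]

theorem square_main {g : ℝ × ℝ → ℂ} (hg : ContinuousOn g Dsq) (hinj : InjOn g Dsq)
    (hb : ∀ x ∈ frontier Dsq, g x ∉ Bset) : ∀ a ∈ Dsq, g a ∉ Bset := by
  intro a haD hBa
  have haF : a ∉ frontier Dsq := fun h => hb a h hBa
  have haI : a ∈ interior Dsq := by
    by_contra h
    exact haF (by rw [Dsq_closed.frontier_eq]; exact ⟨haD, h⟩)
  -- the branch of Bset containing g a
  obtain ⟨σ, hσ, hσim⟩ : ∃ σ : ℝ, (σ = 1 ∨ σ = -1) ∧ 1 ≤ σ * (g a).im := by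
    have := hBa.2
    rw [mem_compl_iff, mem_Ioo, not_and_or] at this
    rcases this with h | h
    · push_neg at h
      exact ⟨-1, Or.inr rfl, by linarith⟩
    · push_neg at h
      exact ⟨1, Or.inl rfl, by linarith⟩
  have hσsq : σ * σ = 1 := by rcases hσ with rfl | rfl <;> norm_num
  set C : Set ℂ := {z | z.re ∈ Icc (-1:ℝ) 1 ∧ 1 ≤ σ * z.im} with hCdef
  have hCB : C ⊆ Bset := by
    intro z hz
    refine ⟨hz.1, ?_⟩
    rw [mem_compl_iff, mem_Ioo, not_and_or]
    rcases hσ with rfl | rfl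
    · right; push_neg; linarith [hz.2]
    · left; push_neg; linarith [hz.2]
  -- bound on g over Dsq
  have hDcomp : IsCompact Dsq := isCompact_Icc.prod isCompact_Icc
  obtain ⟨M, hM⟩ := hDcomp.exists_bound_of_continuousOn hg
  set T : ℝ := max M 0 + 1 with hTdef
  have hT1 : 1 ≤ T := by
    have := le_max_right M 0; simp only [hTdef]; linarith
  have hMT : M < T := by
    have := le_max_left M 0; simp only [hTdef]; linarith
  have hTpos : 0 < T := by linarith
  set z₁ : ℂ := ((σ * T : ℝ) : ℂ) * Complex.I with hz₁def
  have hz₁re : z₁.re = 0 := by simp [hz₁def]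
  have hz₁im : z₁.im = σ * T := by simp [hz₁def]
  have hz₁abs : ‖z₁‖ = T := by
    rw [hz₁def, norm_mul, Complex.norm_I, Complex.norm_real, Real.norm_eq_abs, mul_one, abs_mul]
    rcases hσ with rfl | rfl <;> simp [abs_of_pos hTpos]
  have hz₁C : z₁ ∈ C := by
    refine ⟨by rw [hz₁re]; exact ⟨by norm_num, by norm_num⟩, ?_⟩
    rw [hz₁im, ← mul_assoc, hσsq, one_mul]; exact hT1
  have hz₁ne : z₁ ≠ 0 := by
    intro h
    rw [h] at hz₁abs
    simp at hz₁abs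
    linarith
  have hgaC : g a ∈ C := ⟨hBa.1, hσim⟩
  -- the radius r
  have haI' := haI
  rw [Dsq_interior] at haI'
  obtain ⟨⟨ha1, ha2⟩, ⟨ha3, ha4⟩⟩ := haI'
  set r : ℝ := min (1 - |a.1|) (1 - |a.2|) with hrdef
  have habs1 : |a.1| < 1 := abs_lt.2 ⟨ha1, ha2⟩
  have habs2 : |a.2| < 1 := abs_lt.2 ⟨ha3, ha4⟩
  have hrpos : 0 < r := lt_min (by linarith) (by linarith)
  have hr1 : r ≤ 1 := le_trans (min_le_left _ _) (by linarith [abs_nonneg a.1])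
  have hmemρ : ∀ ρ : ℝ, |ρ| ≤ r → ∀ t : ℝ, a + ρ • circ t ∈ Dsq := by
    intro ρ hρ t
    have hc := Real.abs_cos_le_one (2*π*t)
    have hs := Real.abs_sin_le_one (2*π*t)
    have hρ0 : (0:ℝ) ≤ |ρ| := abs_nonneg ρ
    have hρc : |ρ * Real.cos (2*π*t)| ≤ r := by
      rw [abs_mul]
      calc |ρ| * |Real.cos (2*π*t)| ≤ r * 1 :=
            mul_le_mul hρ hc (abs_nonneg _) (le_trans hρ0 hρ)
        _ = r := mul_one r
    have hρs : |ρ * Real.sin (2*π*t)| ≤ r := by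
      rw [abs_mul]
      calc |ρ| * |Real.sin (2*π*t)| ≤ r * 1 :=
            mul_le_mul hρ hs (abs_nonneg _) (le_trans hρ0 hρ)
        _ = r := mul_one r
    constructor
    · show a.1 + ρ * Real.cos (2*π*t) ∈ Icc (-1:ℝ) 1
      have h1 := abs_le.1 hρc
      have h2 : r ≤ 1 - |a.1| := min_le_left _ _
      have h3 := abs_le.1 (le_of_lt habs1)
      exact ⟨by linarith [h1.1, h3.1, abs_nonneg a.1, neg_abs_le a.1],
             by linarith [h1.2, le_abs_self a.1]⟩
    · show a.2 + ρ * Real.sin (2*π*t) ∈ Icc (-1:ℝ) 1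
      have h1 := abs_le.1 hρs
      have h2 : r ≤ 1 - |a.2| := min_le_right _ _
      exact ⟨by linarith [h1.1, neg_abs_le a.2],
             by linarith [h1.2, le_abs_self a.2]⟩
  have hrr : |r| ≤ r := by rw [abs_of_pos hrpos]
  have hrn : |(-r)| ≤ r := by rw [abs_neg, abs_of_pos hrpos]
  -- distinctness helper
  have hne2 : ∀ ρ₁ ρ₂ : ℝ, |ρ₁| ≤ r → |ρ₂| ≤ r → ρ₁ ≠ ρ₂ → ∀ t : ℝ,
      g (a + ρ₁ • circ t) ≠ g (a + ρ₂ • circ t) := by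
    intro ρ₁ ρ₂ h₁ h₂ hne t heq
    have := hinj (hmemρ ρ₁ h₁ t) (hmemρ ρ₂ h₂ t) heq
    have h3 : ρ₁ • circ t = ρ₂ • circ t := add_left_cancel this
    have h4 : (ρ₁ - ρ₂) • circ t = 0 := by rw [sub_smul, h3, sub_self]
    rcases smul_eq_zero.1 h4 with h5 | h5
    · exact hne (by linarith [sub_eq_zero.1 h5])
    · exact circ_ne_zero t h5
  -- loops
  set γ₁ : ℝ → ℂ := fun t => g (a + r • circ t) - g (a + (-r) • circ t) with hγ₁def
  set γ₂ : ℝ → ℂ := fun t => g (a + r • circ t) - g a with hγ₂def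
  set Γ : ℝ → ℝ × ℝ := fun t => clamp (a + (5:ℝ) • circ t) with hΓdef
  set γ₃ : ℝ → ℂ := fun t => g (Γ t) - g a with hγ₃def
  set γ₄ : ℝ → ℂ := fun t => g (Γ t) - z₁ with hγ₄def
  set γ₅ : ℝ → ℂ := fun _ => - z₁ with hγ₅def
  have hΓmem : ∀ t, Γ t ∈ Dsq := fun t => clamp_mem _
  have hΓfront : ∀ t, Γ t ∈ frontier Dsq := fun t => clamp_frontier (not_mem_Dsq a haI t)
  have hΓnB : ∀ t, g (Γ t) ∉ Bset := fun t => hb _ (hΓfront t)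
  have hΓnC : ∀ t, g (Γ t) ∉ C := fun t h => hΓnB t (hCB h)
  have hΓabs : ∀ t, ‖g (Γ t)‖ ≤ M := fun t => hM _ (hΓmem t)
  -- continuity of basic inner maps
  have hcont_in : ∀ ρ : ℝ, Continuous fun t => a + ρ • circ t :=
    fun ρ => continuous_const.add (circ_cont.const_smul ρ)
  have hcont_Γ : Continuous Γ :=
    clamp_cont.comp (hcont_in 5)
  -- continuity and nonvanishing of loops
  have hγ₁c : ContinuousOn γ₁ (Icc 0 1) :=
    ((hg.comp (hcont_in r).continuousOn fun t _ => hmemρ r hrr t).sub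
     (hg.comp (hcont_in (-r)).continuousOn fun t _ => hmemρ (-r) hrn t))
  have hγ₁ne : ∀ t ∈ Icc (0:ℝ) 1, γ₁ t ≠ 0 := by
    intro t _ h
    exact hne2 r (-r) hrr hrn (by linarith) t (sub_eq_zero.1 h)
  have hγ₂c : ContinuousOn γ₂ (Icc 0 1) :=
    ((hg.comp (hcont_in r).continuousOn fun t _ => hmemρ r hrr t).sub continuousOn_const)
  have hcenter_ne : ∀ ρ : ℝ, |ρ| ≤ r → 0 < ρ → ∀ t : ℝ, g (a + ρ • circ t) ≠ g a := by
    intro ρ hρ hρpos t heq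
    have := hinj (hmemρ ρ hρ t) haD heq
    have h3 : ρ • circ t = 0 := by
      have : a + ρ • circ t = a + 0 := by rw [add_zero]; exact this
      exact add_left_cancel this
    rcases smul_eq_zero.1 h3 with h5 | h5
    · linarith
    · exact circ_ne_zero t h5
  have hγ₂ne : ∀ t ∈ Icc (0:ℝ) 1, γ₂ t ≠ 0 := by
    intro t _ h
    exact hcenter_ne r hrr hrpos t (sub_eq_zero.1 h)
  have hγ₃c : ContinuousOn γ₃ (Icc 0 1) :=
    ((hg.comp hcont_Γ.continuousOn fun t _ => hΓmem t).sub continuousOn_const)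
  have hgΓ_ne_ga : ∀ t, g (Γ t) ≠ g a := by
    intro t heq
    have := hinj (hΓmem t) haD heq
    exact clamp_ne_center haI (by norm_num : (0:ℝ) < 5) t this
  have hγ₃ne : ∀ t ∈ Icc (0:ℝ) 1, γ₃ t ≠ 0 := by
    intro t _ h
    exact hgΓ_ne_ga t (sub_eq_zero.1 h)
  have hγ₄c : ContinuousOn γ₄ (Icc 0 1) :=
    ((hg.comp hcont_Γ.continuousOn fun t _ => hΓmem t).sub continuousOn_const)
  have hγ₄ne : ∀ t ∈ Icc (0:ℝ) 1, γ₄ t ≠ 0 := by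
    intro t _ h
    exact hΓnC t (by rw [sub_eq_zero.1 h]; exact hz₁C)
  have hγ₅ne : ∀ t ∈ Icc (0:ℝ) 1, γ₅ t ≠ 0 := fun t _ => neg_ne_zero.2 hz₁ne
  -- oddness of γ₁
  have hγ₁odd : ∀ t ∈ Icc (0:ℝ) (1/2), γ₁ (t + 1/2) = -γ₁ t := by
    intro t _
    show g (a + r • circ (t + 1/2)) - g (a + (-r) • circ (t + 1/2)) = _
    rw [circ_half, smul_neg, smul_neg]
    have e1 : a + -(r • circ t) = a + (-r) • circ t := by rw [neg_smul]
    have e2 : a + -((-r) • circ t) = a + r • circ t := by rw [neg_smul, neg_neg]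
    rw [e1, e2]
    show _ = -(g (a + r • circ t) - g (a + (-r) • circ t))
    ring
  -- lifts
  obtain ⟨θ₁, hθ₁c, hθ₁e⟩ := exists_lift (convex_Icc (0:ℝ) 1) isCompact_Icc hγ₁c hγ₁ne
  obtain ⟨θ₂, hθ₂c, hθ₂e⟩ := exists_lift (convex_Icc (0:ℝ) 1) isCompact_Icc hγ₂c hγ₂ne
  obtain ⟨θ₃, hθ₃c, hθ₃e⟩ := exists_lift (convex_Icc (0:ℝ) 1) isCompact_Icc hγ₃c hγ₃ne
  obtain ⟨θ₄, hθ₄c, hθ₄e⟩ := exists_lift (convex_Icc (0:ℝ) 1) isCompact_Icc hγ₄c hγ₄ne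
  obtain ⟨θ₅, hθ₅c, hθ₅e⟩ := exists_lift (convex_Icc (0:ℝ) 1) isCompact_Icc
    (continuousOn_const : ContinuousOn γ₅ (Icc 0 1)) hγ₅ne
  have hl₁ : IsLiftOn γ₁ θ₁ (Icc 0 1) := ⟨hθ₁c, hθ₁e⟩
  have hl₂ : IsLiftOn γ₂ θ₂ (Icc 0 1) := ⟨hθ₂c, hθ₂e⟩
  have hl₃ : IsLiftOn γ₃ θ₃ (Icc 0 1) := ⟨hθ₃c, hθ₃e⟩
  have hl₄ : IsLiftOn γ₄ θ₄ (Icc 0 1) := ⟨hθ₄c, hθ₄e⟩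
  have hl₅ : IsLiftOn γ₅ θ₅ (Icc 0 1) := ⟨hθ₅c, hθ₅e⟩
  -- Δ₁ ≠ 0
  have hΔ₁ : θ₁ 1 - θ₁ 0 ≠ 0 := odd_loop_ne_zero hγ₁ne hγ₁odd hl₁
  -- homotopy H1 : γ₂ ~ γ₁
  set Q : Set (ℝ × ℝ) := Icc (0:ℝ) 1 ×ˢ Icc (0:ℝ) 1 with hQdef
  set H₁ : ℝ × ℝ → ℂ := fun w => g (a + r • circ w.2) - g (a + (-(w.1 * r)) • circ w.2) with hH₁def
  have hH₁c : ContinuousOn H₁ Q := by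
    apply ContinuousOn.sub
    · exact hg.comp ((hcont_in r).comp continuous_snd).continuousOn
        (fun w _ => hmemρ r hrr w.2)
    · refine hg.comp (Continuous.continuousOn ?_) ?_
      · exact continuous_const.add (((continuous_fst.mul continuous_const).neg).smul
          (circ_cont.comp continuous_snd))
      · intro w hw
        refine hmemρ (-(w.1 * r)) ?_ w.2
        rw [abs_neg, abs_mul]
        calc |w.1| * |r| ≤ 1 * r := by
              apply mul_le_mul _ (le_of_eq (abs_of_pos hrpos)) (abs_nonneg r) zero_le_one
              rw [_root_.abs_of_nonneg hw.1.1]; exact hw.1.2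
          _ = r := one_mul r
  have hH₁ne : ∀ w ∈ Q, H₁ w ≠ 0 := by
    intro w hw h
    have hwr : |(-(w.1 * r))| ≤ r := by
      rw [abs_neg, abs_mul, _root_.abs_of_nonneg hw.1.1, abs_of_pos hrpos]
      calc w.1 * r ≤ 1 * r := mul_le_mul_of_nonneg_right hw.1.2 hrpos.le
        _ = r := one_mul r
    exact hne2 r (-(w.1 * r)) hrr hwr (aux_r_ne hrpos hw.1.1) w.2 (sub_eq_zero.1 h)
  have hH₁loop : ∀ s ∈ Icc (0:ℝ) 1, H₁ (s, 1) = H₁ (s, 0) := by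
    intro s _
    simp only [hH₁def, circ_one]
  have hl₂' : IsLiftOn (fun t => H₁ (0, t)) θ₂ (Icc 0 1) := by
    have heq : (fun t => H₁ ((0:ℝ), t)) = γ₂ := by
      funext t
      simp only [hH₁def, hγ₂def, zero_mul, neg_zero, zero_smul, add_zero]
    rw [heq]; exact hl₂
  have hl₁' : IsLiftOn (fun t => H₁ (1, t)) θ₁ (Icc 0 1) := by
    have heq : (fun t => H₁ ((1:ℝ), t)) = γ₁ := by
      funext t
      simp only [hH₁def, hγ₁def, one_mul]
    rw [heq]; exact hl₁
  have hΔ₂₁ : θ₂ 1 - θ₂ 0 = θ₁ 1 - θ₁ 0 :=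
    homotopy_invariance hH₁c hH₁ne hH₁loop hl₂' hl₁'
  -- homotopy H2 : γ₂ ~ γ₃
  set H₂ : ℝ × ℝ → ℂ := fun w => g (clamp (a + (r + w.1 * (5 - r)) • circ w.2)) - g a with hH₂def
  have hH₂c : ContinuousOn H₂ Q := by
    apply ContinuousOn.sub _ continuousOn_const
    refine hg.comp (Continuous.continuousOn ?_) (fun w _ => clamp_mem _)
    exact clamp_cont.comp (continuous_const.add
      ((continuous_const.add (continuous_fst.mul continuous_const)).smul
        (circ_cont.comp continuous_snd)))
  have hH₂ne : ∀ w ∈ Q, H₂ w ≠ 0 := by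
    intro w hw h
    have hρpos : 0 < r + w.1 * (5 - r) := aux_rho_pos hrpos hr1 hw.1.1
    have := hinj (clamp_mem _) haD (sub_eq_zero.1 h)
    exact clamp_ne_center haI hρpos w.2 this
  have hH₂loop : ∀ s ∈ Icc (0:ℝ) 1, H₂ (s, 1) = H₂ (s, 0) := by
    intro s _
    simp only [hH₂def, circ_one]
  have hl₂'' : IsLiftOn (fun t => H₂ (0, t)) θ₂ (Icc 0 1) := by
    have heq : (fun t => H₂ ((0:ℝ), t)) = γ₂ := by
      funext t
      simp only [hH₂def, hγ₂def, zero_mul, add_zero]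
      rw [clamp_id (hmemρ r hrr t)]
    rw [heq]; exact hl₂
  have hl₃' : IsLiftOn (fun t => H₂ (1, t)) θ₃ (Icc 0 1) := by
    have heq : (fun t => H₂ ((1:ℝ), t)) = γ₃ := by
      funext t
      have e5 : r + 1 * (5 - r) = 5 := by ring
      simp only [hH₂def, hγ₃def, hΓdef, e5]
    rw [heq]; exact hl₃
  have hΔ₂₃ : θ₂ 1 - θ₂ 0 = θ₃ 1 - θ₃ 0 :=
    homotopy_invariance hH₂c hH₂ne hH₂loop hl₂'' hl₃'
  -- homotopy H3 : γ₃ ~ γ₄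
  set H₃ : ℝ × ℝ → ℂ := fun w => g (Γ w.2) - (g a + (w.1 : ℂ) * (z₁ - g a)) with hH₃def
  have hzsC : ∀ s : ℝ, s ∈ Icc (0:ℝ) 1 → g a + (s : ℂ) * (z₁ - g a) ∈ C := by
    intro s hs
    have hre : (g a + (s:ℂ) * (z₁ - g a)).re = (g a).re + s * (z₁.re - (g a).re) := by
      simp [Complex.add_re, Complex.mul_re, Complex.sub_re, Complex.ofReal_re, Complex.ofReal_im,
        Complex.sub_im]
    have him : (g a + (s:ℂ) * (z₁ - g a)).im = (g a).im + s * (z₁.im - (g a).im) := by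
      simp [Complex.add_im, Complex.mul_im, Complex.sub_im, Complex.ofReal_re, Complex.ofReal_im,
        Complex.sub_re]
    obtain ⟨hs0, hs1'⟩ := hs
    obtain ⟨hga1, hga2⟩ := hgaC.1
    constructor
    · rw [hre, hz₁re, mem_Icc]
      exact aux_re_bound hga1 hga2 hs0 hs1'
    · show 1 ≤ σ * (g a + (s : ℂ) * (z₁ - g a)).im
      rw [him, hz₁im]
      exact aux_im_bound hσsq hgaC.2 hT1 hs0 hs1'
  have hH₃c : ContinuousOn H₃ Q := by
    apply ContinuousOn.sub
    · exact hg.comp (hcont_Γ.comp continuous_snd).continuousOn (fun w _ => hΓmem w.2)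
    · exact (continuous_const.add ((Complex.continuous_ofReal.comp continuous_fst).mul
        continuous_const)).continuousOn
  have hH₃ne : ∀ w ∈ Q, H₃ w ≠ 0 := by
    intro w hw h
    exact hΓnC w.2 (by rw [sub_eq_zero.1 h]; exact hzsC w.1 hw.1)
  have hH₃loop : ∀ s ∈ Icc (0:ℝ) 1, H₃ (s, 1) = H₃ (s, 0) := by
    intro s _
    simp only [hH₃def, hΓdef, circ_one]
  have hl₃'' : IsLiftOn (fun t => H₃ (0, t)) θ₃ (Icc 0 1) := by
    have heq : (fun t => H₃ ((0:ℝ), t)) = γ₃ := by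
      funext t
      simp only [hH₃def, hγ₃def, Complex.ofReal_zero, zero_mul, add_zero]
    rw [heq]; exact hl₃
  have hl₄' : IsLiftOn (fun t => H₃ (1, t)) θ₄ (Icc 0 1) := by
    have heq : (fun t => H₃ ((1:ℝ), t)) = γ₄ := by
      funext t
      simp only [hH₃def, hγ₄def, Complex.ofReal_one, one_mul]
      ring_nf
    rw [heq]; exact hl₄
  have hΔ₃₄ : θ₃ 1 - θ₃ 0 = θ₄ 1 - θ₄ 0 :=
    homotopy_invariance hH₃c hH₃ne hH₃loop hl₃'' hl₄'
  -- homotopy H4 : γ₄ ~ γ₅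
  set H₄ : ℝ × ℝ → ℂ := fun w => ((1 - w.1 : ℝ) : ℂ) * g (Γ w.2) - z₁ with hH₄def
  have hH₄c : ContinuousOn H₄ Q := by
    apply ContinuousOn.sub _ continuousOn_const
    apply ContinuousOn.mul
    · exact (Complex.continuous_ofReal.comp (continuous_const.sub continuous_fst)).continuousOn
    · exact hg.comp (hcont_Γ.comp continuous_snd).continuousOn (fun w _ => hΓmem w.2)
  have hH₄ne : ∀ w ∈ Q, H₄ w ≠ 0 := by
    intro w hw h
    have heq : ((1 - w.1 : ℝ) : ℂ) * g (Γ w.2) = z₁ := sub_eq_zero.1 h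
    have habs := congrArg (‖·‖) heq
    rw [norm_mul, Complex.norm_real, hz₁abs] at habs
    have h1 : |1 - w.1| ≤ 1 := by
      rw [abs_le]; constructor
      · linarith [hw.1.2]
      · linarith [hw.1.1]
    have h2 : ‖g (Γ w.2)‖ ≤ M := hΓabs w.2
    have h3 : (0:ℝ) ≤ ‖g (Γ w.2)‖ := norm_nonneg _
    have habs' : |1 - w.1| * ‖g (Γ w.2)‖ = T := by
      rw [← Real.norm_eq_abs (1 - w.1)]
      exact habs
    exact aux_abs_bound h1 h3 h2 hTdef.symm habs'
  have hH₄loop : ∀ s ∈ Icc (0:ℝ) 1, H₄ (s, 1) = H₄ (s, 0) := by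
    intro s _
    simp only [hH₄def, hΓdef, circ_one]
  have hl₄'' : IsLiftOn (fun t => H₄ (0, t)) θ₄ (Icc 0 1) := by
    have heq : (fun t => H₄ ((0:ℝ), t)) = γ₄ := by
      funext t
      simp only [hH₄def, hγ₄def]
      norm_num
    rw [heq]; exact hl₄
  have hl₅' : IsLiftOn (fun t => H₄ (1, t)) θ₅ (Icc 0 1) := by
    have heq : (fun t => H₄ ((1:ℝ), t)) = γ₅ := by
      funext t
      simp only [hH₄def, hγ₅def]
      norm_num
    rw [heq]; exact hl₅
  have hΔ₄₅ : θ₄ 1 - θ₄ 0 = θ₅ 1 - θ₅ 0 :=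
    homotopy_invariance hH₄c hH₄ne hH₄loop hl₄'' hl₅'
  -- constant loop has Δ = 0
  have hΔ₅ : θ₅ 1 - θ₅ 0 = 0 := by
    have hconstlift : IsLiftOn γ₅ (fun _ => (-z₁).arg) (Icc 0 1) :=
      ⟨continuousOn_const, fun t _ => (Complex.norm_mul_exp_arg_mul_I (-z₁)).symm⟩
    have := lift_diff_unique hγ₅ne hl₅ hconstlift
    simpa using this
  exact hΔ₁ (by linarith)

/-- the linear map (p,q) ↦ p•u + q•s -/
def mkProd (u s : Fin 2 → ℝ) : ℝ × ℝ →ₗ[ℝ] (Fin 2 → ℝ) where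
  toFun z := z.1 • u + z.2 • s
  map_add' x y := by
    simp only [Prod.fst_add, Prod.snd_add]
    module
  map_smul' c x := by
    simp only [Prod.smul_fst, Prod.smul_snd, smul_eq_mul, RingHom.id_apply]
    module

/-- the linear map z ↦ re z • u + im z • s -/
def mkC (u s : Fin 2 → ℝ) : ℂ →ₗ[ℝ] (Fin 2 → ℝ) where
  toFun z := z.re • u + z.im • s
  map_add' x y := by
    simp only [Complex.add_re, Complex.add_im]
    module
  map_smul' c x := by
    simp only [Complex.real_smul, Complex.mul_re, Complex.mul_im, Complex.ofReal_re,
      Complex.ofReal_im, RingHom.id_apply, zero_mul, sub_zero, add_zero, zero_add]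
    module

lemma finrank_prod_eq : Module.finrank ℝ (ℝ × ℝ) = Module.finrank ℝ (Fin 2 → ℝ) := by
  simp [Module.finrank_prod, Module.finrank_self, Module.finrank_fin_fun]

lemma finrank_complex_eq : Module.finrank ℝ ℂ = Module.finrank ℝ (Fin 2 → ℝ) := by
  simp [Complex.finrank_real_complex, Module.finrank_fin_fun]

lemma mkProd_bij {u s : Fin 2 → ℝ} (h : LinearIndependent ℝ ![u, s]) :
    Function.Bijective (mkProd u s) := by
  have hpair := LinearIndependent.pair_iff.1 h
  have hinj : Function.Injective (mkProd u s) := by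
    intro x y hxy
    have h0 : mkProd u s (x - y) = 0 := by rw [map_sub, hxy, sub_self]
    have h0' : (x - y).1 • u + (x - y).2 • s = 0 := h0
    obtain ⟨h1, h2⟩ := hpair _ _ h0'
    have : x - y = 0 := Prod.ext h1 h2
    exact sub_eq_zero.1 this
  exact ⟨hinj, (LinearMap.injective_iff_surjective_of_finrank_eq_finrank finrank_prod_eq).1 hinj⟩

lemma mkC_bij {u s : Fin 2 → ℝ} (h : LinearIndependent ℝ ![u, s]) :
    Function.Bijective (mkC u s) := by
  have hpair := LinearIndependent.pair_iff.1 h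
  have hinj : Function.Injective (mkC u s) := by
    intro x y hxy
    have h0 : mkC u s (x - y) = 0 := by rw [map_sub, hxy, sub_self]
    have h0' : (x - y).re • u + (x - y).im • s = 0 := h0
    obtain ⟨h1, h2⟩ := hpair _ _ h0'
    have : x - y = 0 := Complex.ext h1 h2
    exact sub_eq_zero.1 this
  exact ⟨hinj, (LinearMap.injective_iff_surjective_of_finrank_eq_finrank finrank_complex_eq).1 hinj⟩

end HsetProof

end

open Set in
/-- Lemma bd (condition a' implies condition a): if a continuous injection on `|N₁|`
maps the frontier of `|N₁|` into the complement of `N₂⁺`, then it maps all of `|N₁|`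
into the complement of `N₂⁺`. -/
theorem image_support_disjoint_plus
    (c₁ u₁ s₁ c₂ u₂ s₂ : Fin 2 → ℝ)
    (h₁ : LinearIndependent ℝ ![u₁, s₁]) (h₂ : LinearIndependent ℝ ![u₂, s₂])
    (f : (Fin 2 → ℝ) → Fin 2 → ℝ)
    (hf : ContinuousOn f (hsetSupport c₁ u₁ s₁))
    (hinj : Set.InjOn f (hsetSupport c₁ u₁ s₁))
    (hbd : f '' frontier (hsetSupport c₁ u₁ s₁) ∩ hsetPlus c₂ u₂ s₂ = ∅) :
    f '' hsetSupport c₁ u₁ s₁ ∩ hsetPlus c₂ u₂ s₂ = ∅ := by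
  classical
  set Φ : ℝ × ℝ ≃ₜ (Fin 2 → ℝ) :=
    ((LinearEquiv.ofBijective (HsetProof.mkProd u₁ s₁)
      (HsetProof.mkProd_bij h₁)).toContinuousLinearEquiv.toHomeomorph).trans
      (Homeomorph.addLeft c₁) with hΦdef
  have hΦ : ∀ z : ℝ × ℝ, Φ z = c₁ + (z.1 • u₁ + z.2 • s₁) := fun z => rfl
  set Ψ : ℂ ≃ₜ (Fin 2 → ℝ) :=
    ((LinearEquiv.ofBijective (HsetProof.mkC u₂ s₂)
      (HsetProof.mkC_bij h₂)).toContinuousLinearEquiv.toHomeomorph).trans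
      (Homeomorph.addLeft c₂) with hΨdef
  have hΨ : ∀ z : ℂ, Ψ z = c₂ + (z.re • u₂ + z.im • s₂) := fun z => rfl
  have h_supp : hsetSupport c₁ u₁ s₁ = Φ '' HsetProof.Dsq := by
    ext x
    constructor
    · rintro ⟨p, hp, q, hq, rfl⟩
      exact ⟨(p, q), ⟨hp, hq⟩, by rw [hΦ]; abel⟩
    · rintro ⟨⟨p, q⟩, ⟨hp, hq⟩, rfl⟩
      exact ⟨p, hp, q, hq, by rw [hΦ]; abel⟩
  have h_plus : hsetPlus c₂ u₂ s₂ = Ψ '' HsetProof.Bset := by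
    ext x
    constructor
    · rintro ⟨p, hp, q, hq, rfl⟩
      exact ⟨⟨p, q⟩, ⟨hp, hq⟩, by rw [hΨ]; abel⟩
    · rintro ⟨z, ⟨hzre, hzim⟩, rfl⟩
      exact ⟨z.re, hzre, z.im, hzim, by rw [hΨ]; abel⟩
  have h_front : frontier (hsetSupport c₁ u₁ s₁) = Φ '' frontier HsetProof.Dsq := by
    rw [h_supp, Homeomorph.image_frontier]
  set g : ℝ × ℝ → ℂ := fun w => Ψ.symm (f (Φ w)) with hgdef
  have hmapsto : Set.MapsTo Φ HsetProof.Dsq (hsetSupport c₁ u₁ s₁) := by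
    rw [h_supp]; exact fun w hw => ⟨w, hw, rfl⟩
  have hgc : ContinuousOn g HsetProof.Dsq :=
    Ψ.symm.continuous.comp_continuousOn (hf.comp Φ.continuous.continuousOn hmapsto)
  have hginj : Set.InjOn g HsetProof.Dsq := by
    intro x hx y hy hxy
    exact Φ.injective (hinj (hmapsto hx) (hmapsto hy) (Ψ.symm.injective hxy))
  have hgb : ∀ x ∈ frontier HsetProof.Dsq, g x ∉ HsetProof.Bset := by
    intro x hx hmem
    have h1 : f (Φ x) ∈ hsetPlus c₂ u₂ s₂ := by
      rw [h_plus]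
      exact ⟨g x, hmem, by rw [hgdef]; exact Ψ.apply_symm_apply _⟩
    have h2 : f (Φ x) ∈ f '' frontier (hsetSupport c₁ u₁ s₁) := by
      rw [h_front]; exact Set.mem_image_of_mem f (Set.mem_image_of_mem Φ hx)
    have h3 : f (Φ x) ∈ f '' frontier (hsetSupport c₁ u₁ s₁) ∩ hsetPlus c₂ u₂ s₂ := ⟨h2, h1⟩
    rw [hbd] at h3
    exact h3
  rw [Set.eq_empty_iff_forall_notMem]
  rintro y ⟨⟨x, hxs, rfl⟩, hyP⟩
  rw [h_supp] at hxs
  obtain ⟨w, hw, rfl⟩ := hxs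
  apply HsetProof.square_main hgc hginj hgb w hw
  rw [h_plus] at hyP
  obtain ⟨z, hz, hze⟩ := hyP
  show Ψ.symm (f (Φ w)) ∈ HsetProof.Bset
  rw [← hze, Ψ.symm_apply_apply]
  exact hz
end

section
/- Let g = (g₁, g₂) : [-1,1] → ℝ² be continuous with g₁ strictly increasing on [-1,1]. Assume: (i) there exists t₀ ∈ (-1,1) with g(t₀) ∈ (-1,1) × (-1,1); (ii) g(t) ∉ [-1,1] × (ℝ ∖ (-1,1)) for every t ∈ [-1,1]; (iii) g₁(-1) < -1 and g₁(1) > 1. Then there exist t_*, t* with -1 < t_* < t₀ < t* < 1 such that g(t) ∈ (-∞,-1) × ℝ for all t ∈ [-1, t_*), g(t) ∈ (1,∞) × ℝ for all t ∈ (t*, 1], and g(t) ∈ (-1,1) × (-1,1) for all t ∈ (t_*, t*). -/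
/-!
The first coordinate `x = g₁` is continuous and strictly increasing, so by the intermediate value
theorem it crosses each of the levels `-1` and `1` at exactly one time, `t_*` before `t₀` and
`t*` after it. Between these times `-1 < x < 1`, and there the avoided half-strips force the
second coordinate into `(-1, 1)` as well.
-/

open Set

theorem StrictMonoOn.exists_mem_Ioo_lt_iff_and_lt_iff {f : ℝ → ℝ} {s : Set ℝ} {a b c : ℝ}
    (hmono : StrictMonoOn f s) (hab : a ≤ b) (hs : Icc a b ⊆ s)
    (hf : ContinuousOn f (Icc a b)) (ha : f a < c) (hb : c < f b) :
    ∃ r ∈ Ioo a b, ∀ t ∈ s, (f t < c ↔ t < r) ∧ (c < f t ↔ r < t) := by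
  obtain ⟨r, hr, rfl⟩ := intermediate_value_Ioo hab hf ⟨ha, hb⟩
  have hrs : r ∈ s := hs (Ioo_subset_Icc_self hr)
  exact ⟨r, hr, fun t ht => ⟨hmono.lt_iff_lt ht hrs, hmono.lt_iff_lt hrs ht⟩⟩

/-- Crossing structure (Lemma odwrotne, coordinate form): a continuous curve with strictly
increasing first coordinate which avoids the half-strips above and below the unit square,
passes through the open square, and starts strictly to the left / ends strictly to the right
of the square, crosses the square exactly once. -/
theorem curve_crosses_square_once
    (g : ℝ → ℝ × ℝ) (hg : ContinuousOn g (Set.Icc (-1 : ℝ) 1))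
    (hmono : StrictMonoOn (fun t => (g t).1) (Set.Icc (-1 : ℝ) 1))
    (t₀ : ℝ) (ht₀ : t₀ ∈ Set.Ioo (-1 : ℝ) 1)
    (hin : g t₀ ∈ Set.Ioo (-1 : ℝ) 1 ×ˢ Set.Ioo (-1 : ℝ) 1)
    (havoid : ∀ t ∈ Set.Icc (-1 : ℝ) 1,
      g t ∉ Set.Icc (-1 : ℝ) 1 ×ˢ (Set.Ioo (-1 : ℝ) 1)ᶜ)
    (hleft : (g (-1)).1 < -1) (hright : 1 < (g 1).1) :
    ∃ tstar tStar : ℝ, -1 < tstar ∧ tstar < t₀ ∧ t₀ < tStar ∧ tStar < 1 ∧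
      (∀ t ∈ Set.Ico (-1 : ℝ) tstar, (g t).1 < -1) ∧
      (∀ t ∈ Set.Ioc tStar (1 : ℝ), 1 < (g t).1) ∧
      (∀ t ∈ Set.Ioo tstar tStar,
        g t ∈ Set.Ioo (-1 : ℝ) 1 ×ˢ Set.Ioo (-1 : ℝ) 1) := by
  have hx : ContinuousOn (fun t => (g t).1) (Icc (-1) 1) := continuous_fst.comp_continuousOn hg
  have hleft_sub : Icc (-1) t₀ ⊆ Icc (-1) 1 := Icc_subset_Icc_right ht₀.2.le
  have hright_sub : Icc t₀ 1 ⊆ Icc (-1) 1 := Icc_subset_Icc_left ht₀.1.le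
  obtain ⟨tstar, ⟨htstar₁, htstar₂⟩, hcross_left⟩ := hmono.exists_mem_Ioo_lt_iff_and_lt_iff
    ht₀.1.le hleft_sub (hx.mono hleft_sub) hleft hin.1.1
  obtain ⟨tStar, ⟨htStar₁, htStar₂⟩, hcross_right⟩ := hmono.exists_mem_Ioo_lt_iff_and_lt_iff
    ht₀.2.le hright_sub (hx.mono hright_sub) hin.1.2 hright
  refine ⟨tstar, tStar, htstar₁, htstar₂, htStar₁, htStar₂, ?_, ?_, ?_⟩
  · rintro t ⟨ht₁, ht₂⟩
    exact ((hcross_left t ⟨ht₁, by linarith⟩).1).2 ht₂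
  · rintro t ⟨ht₁, ht₂⟩
    exact ((hcross_right t ⟨by linarith, ht₂⟩).2).2 ht₁
  · rintro t ⟨ht₁, ht₂⟩
    have ht : t ∈ Icc (-1) 1 := ⟨by linarith, by linarith⟩
    have hfst : (g t).1 ∈ Ioo (-1) 1 :=
      ⟨((hcross_left t ht).2).2 ht₁, ((hcross_right t ht).1).2 ht₂⟩
    exact ⟨hfst, not_not.mp fun hsnd => havoid t ht ⟨Ioo_subset_Icc_self hfst, hsnd⟩⟩
end

section
/- Let c₁, u₁, s₁, c₂, u₂, s₂ ∈ ℝ² with u₁, s₁ linearly independent and u₂, s₂ linearly independent. Let |N₁| = {c₁ + p·u₁ + q·s₁ : p,q ∈ [-1,1]}, N₁^{le} = {c₁ - u₁ + q·s₁ : q ∈ [-1,1]}, N₁^{re} = {c₁ + u₁ + q·s₁ : q ∈ [-1,1]}, int(N₂^l) = {c₂ + p·u₂ + q·s₂ : p < -1}, int(N₂^r) = {c₂ + p·u₂ + q·s₂ : p > 1}, int|N₂| = {c₂ + p·u₂ + q·s₂ : p,q ∈ (-1,1)}, and N₂⁺ = {c₂ + p·u₂ + q·s₂ : p ∈ [-1,1],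 q ∈ ℝ∖(-1,1)}. Let f : |N₁| → ℝ² be continuous and injective, let γ(t) = c₁ + t·u₁, let A be the 2×2 matrix with columns u₂ and s₂, and let g(t) = A⁻¹·(f(γ(t)) - c₂). Assume: (b+) f(N₁^{le}) ⊆ int(N₂^l) and f(N₁^{re}) ⊆ int(N₂^r); (a1) the first coordinate g₁ of g is strictly increasing on [-1,1]; (a2) there exists t₀ ∈ (-1,1) with f(γ(t₀)) ∈ int|N₂|; (a3) f(|N₁|) ∩ N₂⁺ = ∅. Then there exist t_*, t* with -1 < t_* < t₀ < t* < 1 such that f(γ(t)) ∈ int(N₂^l) for all t ∈ [-1, t_*), f(γ(t)) ∈ int(N₂^r) for all t ∈ (t*, 1], and f(γ(t)) ∈ int|N₂| for all t ∈ (t_*, t*). -/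
/-- The left edge `N^{le} = c_N({-1} × [-1,1])`. -/
def hsetLeftEdge (c u s : Fin 2 → ℝ) : Set (Fin 2 → ℝ) :=
  {x | ∃ q ∈ Set.Icc (-1 : ℝ) 1, x = c - u + q • s}

/-- The right edge `N^{re} = c_N({1} × [-1,1])`. -/
def hsetRightEdge (c u s : Fin 2 → ℝ) : Set (Fin 2 → ℝ) :=
  {x | ∃ q ∈ Set.Icc (-1 : ℝ) 1, x = c + u + q • s}

/-- The interior of the left side, `int(N^l) = c_N((-∞,-1) × ℝ)`. -/
def hsetIntLeft (c u s : Fin 2 → ℝ) : Set (Fin 2 → ℝ) :=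
  {x | ∃ p : ℝ, p < -1 ∧ ∃ q : ℝ, x = c + p • u + q • s}

/-- The interior of the right side, `int(N^r) = c_N((1,∞) × ℝ)`. -/
def hsetIntRight (c u s : Fin 2 → ℝ) : Set (Fin 2 → ℝ) :=
  {x | ∃ p : ℝ, 1 < p ∧ ∃ q : ℝ, x = c + p • u + q • s}

/-- The interior of the support, `int|N| = c_N((-1,1) × (-1,1))`. -/
def hsetIntSupport (c u s : Fin 2 → ℝ) : Set (Fin 2 → ℝ) :=
  {x | ∃ p ∈ Set.Ioo (-1 : ℝ) 1, ∃ q ∈ Set.Ioo (-1 : ℝ) 1, x = c + p • u + q • s}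

/-!
The first `N₂`-coordinate of `f ∘ γ` is continuous and strictly increasing, and by (b+) and
(a2) it runs from below `-1` through `(-1, 1)` at `t₀` to above `1`; the intermediate value
theorem gives the times `t_* < t₀ < t^*` where it equals `-1` and `1`. Between them the second
coordinate must also lie in `(-1, 1)`, for otherwise `f ∘ γ` would meet `N₂⁺`, contradicting (a3).
-/

open Matrix Set

section Coordinates

variable {A : Matrix (Fin 2) (Fin 2) ℝ} {u s : Fin 2 → ℝ}

lemma mulVec_eq_of_columns (hA : ∀ i, A i 0 = u i ∧ A i 1 = s i) (v : Fin 2 → ℝ) :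
    A *ᵥ v = v 0 • u + v 1 • s := by
  ext i
  simp [mulVec, dotProduct, Fin.sum_univ_two, (hA i).1, (hA i).2, mul_comm]

lemma isUnit_det_of_columns (hA : ∀ i, A i 0 = u i ∧ A i 1 = s i)
    (hus : LinearIndependent ℝ ![u, s]) : IsUnit A.det := by
  refine isUnit_iff_ne_zero.2 fun hdet => ?_
  obtain ⟨v, hv_ne, hv⟩ := exists_mulVec_eq_zero_iff.2 hdet
  rw [mulVec_eq_of_columns hA] at hv
  obtain ⟨hv₀, hv₁⟩ := LinearIndependent.pair_iff.1 hus (v 0) (v 1) hv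
  exact hv_ne (funext fun i => by fin_cases i <;> assumption)

variable (hA : ∀ i, A i 0 = u i ∧ A i 1 = s i) (hus : LinearIndependent ℝ ![u, s])
include hA hus

lemma eq_add_smul_add_smul_iff {c x : Fin 2 → ℝ} {p q : ℝ} :
    x = c + p • u + q • s ↔ A⁻¹ *ᵥ (x - c) = ![p, q] := by
  have hunit := isUnit_det_of_columns hA hus
  have hchart : c + p • u + q • s = c + A *ᵥ ![p, q] := by
    rw [mulVec_eq_of_columns hA, add_assoc]; rfl
  rw [hchart, ← sub_eq_iff_eq_add']
  constructor
  · intro h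
    rw [h, mulVec_mulVec, nonsing_inv_mul A hunit, one_mulVec]
  · intro h
    rw [← h, mulVec_mulVec, mul_nonsing_inv A hunit, one_mulVec]

lemma eq_add_coord_smul_add_coord_smul (c x : Fin 2 → ℝ) :
    x = c + (A⁻¹ *ᵥ (x - c)) 0 • u + (A⁻¹ *ᵥ (x - c)) 1 • s :=
  (eq_add_smul_add_smul_iff hA hus).2 (by ext i; fin_cases i <;> rfl)

lemma mem_hsetIntLeft_iff {c x : Fin 2 → ℝ} :
    x ∈ hsetIntLeft c u s ↔ (A⁻¹ *ᵥ (x - c)) 0 < -1 := by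
  constructor
  · rintro ⟨p, hp, q, hx⟩
    simpa [(eq_add_smul_add_smul_iff hA hus).1 hx] using hp
  · exact fun h => ⟨_, h, _, eq_add_coord_smul_add_coord_smul hA hus c x⟩

lemma mem_hsetIntRight_iff {c x : Fin 2 → ℝ} :
    x ∈ hsetIntRight c u s ↔ 1 < (A⁻¹ *ᵥ (x - c)) 0 := by
  constructor
  · rintro ⟨p, hp, q, hx⟩
    simpa [(eq_add_smul_add_smul_iff hA hus).1 hx] using hp
  · exact fun h => ⟨_, h, _, eq_add_coord_smul_add_coord_smul hA hus c x⟩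

lemma mem_hsetIntSupport_iff {c x : Fin 2 → ℝ} :
    x ∈ hsetIntSupport c u s ↔
      (A⁻¹ *ᵥ (x - c)) 0 ∈ Ioo (-1) 1 ∧ (A⁻¹ *ᵥ (x - c)) 1 ∈ Ioo (-1) 1 := by
  constructor
  · rintro ⟨p, hp, q, hq, hx⟩
    simpa [(eq_add_smul_add_smul_iff hA hus).1 hx] using And.intro hp hq
  · exact fun h => ⟨_, h.1, _, h.2, eq_add_coord_smul_add_coord_smul hA hus c x⟩

lemma mem_hsetPlus_iff {c x : Fin 2 → ℝ} :
    x ∈ hsetPlus c u s ↔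
      (A⁻¹ *ᵥ (x - c)) 0 ∈ Icc (-1) 1 ∧ (A⁻¹ *ᵥ (x - c)) 1 ∉ Ioo (-1) 1 := by
  constructor
  · rintro ⟨p, hp, q, hq, hx⟩
    simpa [(eq_add_smul_add_smul_iff hA hus).1 hx] using And.intro hp hq
  · exact fun h => ⟨_, h.1, _, h.2, eq_add_coord_smul_add_coord_smul hA hus c x⟩

end Coordinates

section CentralLine

variable (c u s : Fin 2 → ℝ)

lemma add_smul_mem_hsetSupport {t : ℝ} (ht : t ∈ Icc (-1) 1) :
    c + t • u ∈ hsetSupport c u s :=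
  ⟨t, ht, 0, by norm_num, by simp⟩

lemma add_neg_one_smul_mem_hsetLeftEdge : c + (-1 : ℝ) • u ∈ hsetLeftEdge c u s :=
  ⟨0, by norm_num, by simp [sub_eq_add_neg]⟩

lemma add_one_smul_mem_hsetRightEdge : c + (1 : ℝ) • u ∈ hsetRightEdge c u s :=
  ⟨0, by norm_num, by simp⟩

end CentralLine

lemma StrictMonoOn.exists_crossing_times {G : ℝ → ℝ} {a b α β t₀ : ℝ}
    (hcont : ContinuousOn G (Icc a b)) (hmono : StrictMonoOn G (Icc a b))
    (ha : G a < α) (hb : β < G b) (ht₀ : t₀ ∈ Ioo a b) (hGt₀ : G t₀ ∈ Ioo α β) :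
    ∃ t₁ t₂ : ℝ, a < t₁ ∧ t₁ < t₀ ∧ t₀ < t₂ ∧ t₂ < b ∧
      (∀ t ∈ Ico a t₁, G t < α) ∧ (∀ t ∈ Ioc t₂ b, β < G t) ∧
      ∀ t ∈ Ioo t₁ t₂, G t ∈ Ioo α β := by
  obtain ⟨t₁, ht₁, hGt₁⟩ := intermediate_value_Ioo ht₀.1.le
    (hcont.mono (Icc_subset_Icc_right ht₀.2.le)) ⟨ha, hGt₀.1⟩
  obtain ⟨t₂, ht₂, hGt₂⟩ := intermediate_value_Ioo ht₀.2.le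
    (hcont.mono (Icc_subset_Icc_left ht₀.1.le)) ⟨hGt₀.2, hb⟩
  have ht₁_mem : t₁ ∈ Icc a b := ⟨ht₁.1.le, ht₁.2.le.trans ht₀.2.le⟩
  have ht₂_mem : t₂ ∈ Icc a b := ⟨ht₀.1.le.trans ht₂.1.le, ht₂.2.le⟩
  refine ⟨t₁, t₂, ht₁.1, ht₁.2, ht₂.1, ht₂.2, fun t ht => ?_, fun t ht => ?_, fun t ht => ?_⟩
  · exact hGt₁ ▸ hmono ⟨ht.1, ht.2.le.trans ht₁_mem.2⟩ ht₁_mem ht.2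
  · exact hGt₂ ▸ hmono ht₂_mem ⟨ht₂_mem.1.trans ht.1.le, ht.2⟩ ht.1
  · have ht_mem : t ∈ Icc a b := ⟨ht₁_mem.1.trans ht.1.le, ht.2.le.trans ht₂_mem.2⟩
    exact ⟨hGt₁ ▸ hmono ht₁_mem ht_mem ht.1, hGt₂ ▸ hmono ht_mem ht₂_mem ht.2⟩

theorem central_line_crossing_general
    (c₁ u₁ s₁ c₂ u₂ s₂ : Fin 2 → ℝ)
    (h₂ : LinearIndependent ℝ ![u₂, s₂])
    (f : (Fin 2 → ℝ) → Fin 2 → ℝ)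
    (hf : ContinuousOn f (hsetSupport c₁ u₁ s₁))
    (A : Matrix (Fin 2) (Fin 2) ℝ)
    (hA : ∀ i, A i 0 = u₂ i ∧ A i 1 = s₂ i)
    (hbplus : f '' hsetLeftEdge c₁ u₁ s₁ ⊆ hsetIntLeft c₂ u₂ s₂ ∧
        f '' hsetRightEdge c₁ u₁ s₁ ⊆ hsetIntRight c₂ u₂ s₂)
    (ha1 : StrictMonoOn (fun t : ℝ => A⁻¹.mulVec (f (c₁ + t • u₁) - c₂) 0)
        (Set.Icc (-1 : ℝ) 1))
    (t₀ : ℝ) (ht₀ : t₀ ∈ Set.Ioo (-1 : ℝ) 1)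
    (ha2 : f (c₁ + t₀ • u₁) ∈ hsetIntSupport c₂ u₂ s₂)
    (ha3 : f '' hsetSupport c₁ u₁ s₁ ∩ hsetPlus c₂ u₂ s₂ = ∅) :
    ∃ tstar tStar : ℝ, -1 < tstar ∧ tstar < t₀ ∧ t₀ < tStar ∧ tStar < 1 ∧
      (∀ t ∈ Set.Ico (-1 : ℝ) tstar, f (c₁ + t • u₁) ∈ hsetIntLeft c₂ u₂ s₂) ∧
      (∀ t ∈ Set.Ioc tStar (1 : ℝ), f (c₁ + t • u₁) ∈ hsetIntRight c₂ u₂ s₂) ∧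
      (∀ t ∈ Set.Ioo tstar tStar, f (c₁ + t • u₁) ∈ hsetIntSupport c₂ u₂ s₂) := by
  set g : ℝ → Fin 2 → ℝ := fun t => A⁻¹ *ᵥ (f (c₁ + t • u₁) - c₂)
  have hg_cont : ContinuousOn (fun t => g t 0) (Icc (-1) 1) := by
    have hfγ : ContinuousOn (fun t : ℝ => f (c₁ + t • u₁)) (Icc (-1) 1) :=
      hf.comp (by fun_prop) fun t ht => add_smul_mem_hsetSupport c₁ u₁ s₁ ht
    exact (by fun_prop : Continuous fun x => (A⁻¹ *ᵥ (x - c₂)) 0).comp_continuousOn hfγ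
  have hg_left : g (-1) 0 < -1 := (mem_hsetIntLeft_iff hA h₂).1 <|
    hbplus.1 ⟨_, add_neg_one_smul_mem_hsetLeftEdge c₁ u₁ s₁, rfl⟩
  have hg_right : 1 < g 1 0 := (mem_hsetIntRight_iff hA h₂).1 <|
    hbplus.2 ⟨_, add_one_smul_mem_hsetRightEdge c₁ u₁ s₁, rfl⟩
  obtain ⟨tstar, tStar, htstar, htstar_t₀, ht₀_tStar, htStar, hleft, hright, hmid⟩ :=
    StrictMonoOn.exists_crossing_times hg_cont ha1 hg_left hg_right ht₀
      ((mem_hsetIntSupport_iff hA h₂).1 ha2).1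
  refine ⟨tstar, tStar, htstar, htstar_t₀, ht₀_tStar, htStar,
    fun t ht => (mem_hsetIntLeft_iff hA h₂).2 (hleft t ht),
    fun t ht => (mem_hsetIntRight_iff hA h₂).2 (hright t ht), fun t ht => ?_⟩
  have ht_mem : t ∈ Icc (-1 : ℝ) 1 := ⟨htstar.le.trans ht.1.le, ht.2.le.trans htStar.le⟩
  refine (mem_hsetIntSupport_iff hA h₂).2 ⟨hmid t ht, ?_⟩
  by_contra hq
  refine ha3.subset ⟨⟨_, add_smul_mem_hsetSupport c₁ u₁ s₁ ht_mem, rfl⟩, ?_⟩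
  exact (mem_hsetPlus_iff hA h₂).2 ⟨Ioo_subset_Icc_self (hmid t ht), hq⟩

/-- Crossing structure in the proof of Lemma odwrotne: under conditions b+, a1, a2, a3
for a continuous injection `f` on `|N₁|`, the image of the horizontal central line `γ`
of `|N₁|` stays in `int(N₂^l)` before time `t_*`, in `int|N₂|` on `(t_*, t^*)` and in
`int(N₂^r)` after `t^*`. -/
theorem central_line_crossing
    (c₁ u₁ s₁ c₂ u₂ s₂ : Fin 2 → ℝ)
    (h₁ : LinearIndependent ℝ ![u₁, s₁]) (h₂ : LinearIndependent ℝ ![u₂, s₂])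
    (f : (Fin 2 → ℝ) → Fin 2 → ℝ)
    (hf : ContinuousOn f (hsetSupport c₁ u₁ s₁))
    (hinj : Set.InjOn f (hsetSupport c₁ u₁ s₁))
    (A : Matrix (Fin 2) (Fin 2) ℝ)
    (hA : ∀ i, A i 0 = u₂ i ∧ A i 1 = s₂ i)
    (hbplus : f '' hsetLeftEdge c₁ u₁ s₁ ⊆ hsetIntLeft c₂ u₂ s₂ ∧
        f '' hsetRightEdge c₁ u₁ s₁ ⊆ hsetIntRight c₂ u₂ s₂)
    (ha1 : StrictMonoOn (fun t : ℝ => A⁻¹.mulVec (f (c₁ + t • u₁) - c₂) 0)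
        (Set.Icc (-1 : ℝ) 1))
    (t₀ : ℝ) (ht₀ : t₀ ∈ Set.Ioo (-1 : ℝ) 1)
    (ha2 : f (c₁ + t₀ • u₁) ∈ hsetIntSupport c₂ u₂ s₂)
    (ha3 : f '' hsetSupport c₁ u₁ s₁ ∩ hsetPlus c₂ u₂ s₂ = ∅) :
    ∃ tstar tStar : ℝ, -1 < tstar ∧ tstar < t₀ ∧ t₀ < tStar ∧ tStar < 1 ∧
      (∀ t ∈ Set.Ico (-1 : ℝ) tstar, f (c₁ + t • u₁) ∈ hsetIntLeft c₂ u₂ s₂) ∧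
      (∀ t ∈ Set.Ioc tStar (1 : ℝ), f (c₁ + t • u₁) ∈ hsetIntRight c₂ u₂ s₂) ∧
      (∀ t ∈ Set.Ioo tstar tStar, f (c₁ + t • u₁) ∈ hsetIntSupport c₂ u₂ s₂) :=
  central_line_crossing_general c₁ u₁ s₁ c₂ u₂ s₂ h₂ f hf A hA hbplus ha1 t₀ ht₀ ha2 ha3
end
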